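/- arXiv:2310.19169 — 6 statements merged into one kernel-verified Lean document; each statement's English description precedes it below -/
import Mathlib

section
/- If G is a self-complementary finite simple graph on n vertices with independence number k = α(G), then √n ≤ Θ(G) ≤ 16 · n^{(k−1)/(k+1)}. -/
open scoped Classical

noncomputable def indepNum {V : Type*} [Fintype V] (G : SimpleGraph V) : ℕ :=
  sSup { n : ℕ | ∃ s : Finset V, (∀ i ∈ s, ∀ j ∈ s, i ≠ j → ¬ G.Adj i j) ∧ s.card = n }

def strongProd {α β : Type*} (G : SimpleGraph α) (H : SimpleGraph β) :
    SimpleGraph (α × β) where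
  Adj x y := x ≠ y ∧ (x.1 = y.1 ∨ G.Adj x.1 y.1) ∧ (x.2 = y.2 ∨ H.Adj x.2 y.2)
  symm := by
    constructor
    rintro x y ⟨h0, h1, h2⟩
    exact ⟨h0.symm, h1.imp Eq.symm (fun h => h.symm), h2.imp Eq.symm (fun h => h.symm)⟩
  loopless := by constructor; rintro x ⟨h0, -, -⟩; exact h0 rfl

def strongPow {α : Type*} (G : SimpleGraph α) (k : ℕ) : SimpleGraph (Fin k → α) where
  Adj x y := x ≠ y ∧ ∀ i, x i = y i ∨ G.Adj (x i) (y i)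
  symm := by
    constructor
    rintro x y ⟨h0, h1⟩
    exact ⟨h0.symm, fun i => (h1 i).imp Eq.symm (fun h => h.symm)⟩
  loopless := by constructor; rintro x ⟨h0, -⟩; exact h0 rfl

noncomputable def shannonCapacity {α : Type*} [Fintype α] (G : SimpleGraph α) : ℝ :=
  ⨆ k : ℕ+, (indepNum (strongPow G (k : ℕ)) : ℝ) ^ ((1 : ℝ) / ((k : ℕ) : ℝ))

/-!
Lower bound: for an isomorphism `φ : G ≃g Gᶜ`, the `n` vertices `(v, φ v)` form an
independent set of `G ⊠ G`, so `Θ(G) ≥ α(G ⊠ G)^{1/2} ≥ √n`.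

Upper bound: `φ` maps cliques of `G` to independent sets, so both the clique number and the
independence number of `G` are at most `k`, and the Erdős–Szekeres form of Ramsey's theorem
gives `n < C(2k, k) ≤ 4^k`. Hence `n^{2/(k+1)} ≤ 16`, and the trivial bound `Θ(G) ≤ n` yields
`Θ(G) ≤ n = n^{(k-1)/(k+1)} n^{2/(k+1)} ≤ 16 n^{(k-1)/(k+1)}`.
-/

open Finset

section IndepNum

variable {V : Type*} [Fintype V] (G : SimpleGraph V)

lemma indepNum_le_card : indepNum G ≤ Fintype.card V :=
  csSup_le ⟨0, ∅, by simp⟩ fun _ ⟨s, _, hs⟩ => hs ▸ s.card_le_univ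

lemma card_le_indepNum_of_isIndepSet {G : SimpleGraph V} {s : Finset V}
    (hs : G.IsIndepSet (s : Set V)) : #s ≤ indepNum G :=
  le_csSup ⟨Fintype.card V, fun _ ⟨t, _, ht⟩ => ht ▸ t.card_le_univ⟩ ⟨s, hs, rfl⟩

lemma card_le_indepNum_of_isClique_of_iso_compl (φ : G ≃g Gᶜ) {s : Finset V}
    (hs : G.IsClique (s : Set V)) : #s ≤ indepNum G := by
  have hφs : G.IsIndepSet (s.image φ : Set V) := by
    rw [← SimpleGraph.isClique_compl, coe_image]
    rintro _ ⟨v, hv, rfl⟩ _ ⟨w, hw, rfl⟩ hvw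
    exact φ.map_rel_iff.2 (hs hv hw fun h => hvw (congrArg φ h))
  simpa [card_image_of_injective s φ.injective] using card_le_indepNum_of_isIndepSet hφs

end IndepNum

section Ramsey

variable {V : Type*} (G : SimpleGraph V)

lemma eq_empty_of_forall_isClique_card_le_zero {s : Finset V}
    (h : ∀ t ⊆ s, G.IsClique (t : Set V) → #t ≤ 0) : s = ∅ :=
  eq_empty_of_forall_notMem fun v hv => by
    simpa using h {v} (singleton_subset_iff.2 hv) (by simp)

lemma forall_isClique_card_le_of_subset_filter_adj [DecidableRel G.Adj] {s : Finset V} {v : V}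
    {a : ℕ} (hv : v ∈ s) (h : ∀ t ⊆ s, G.IsClique (t : Set V) → #t ≤ a + 1) :
    ∀ t ⊆ (s.erase v).filter (G.Adj v), G.IsClique (t : Set V) → #t ≤ a := by
  intro t ht hcl
  have hvt : v ∉ t := fun hv' => G.loopless.irrefl v (mem_filter.1 (ht hv')).2
  have hts : insert v t ⊆ s :=
    insert_subset hv (ht.trans ((filter_subset _ _).trans (erase_subset _ _)))
  have hins := h (insert v t) hts <| by
    rw [coe_insert]
    exact hcl.insert fun u hu _ => (mem_filter.1 (ht hu)).2
  rw [card_insert_of_notMem hvt] at hins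
  omega

lemma card_filter_adj_add_card_filter_compl_adj {s : Finset V} {v : V} (hv : v ∈ s) :
    #((s.erase v).filter (G.Adj v)) + #((s.erase v).filter (Gᶜ.Adj v)) + 1 = #s := by
  have hcompl : (s.erase v).filter (Gᶜ.Adj v) = (s.erase v).filter (fun u => ¬ G.Adj v u) :=
    filter_congr fun u hu => by simp [SimpleGraph.compl_adj, (ne_of_mem_erase hu).symm]
  rw [hcompl, card_filter_add_card_filter_not, card_erase_add_one hv]

theorem card_lt_choose_of_forall_isClique_card_le (a b : ℕ) (s : Finset V)
    (hG : ∀ t ⊆ s, G.IsClique (t : Set V) → #t ≤ a)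
    (hGc : ∀ t ⊆ s, Gᶜ.IsClique (t : Set V) → #t ≤ b) : #s < (a + b).choose a := by
  induction a generalizing b s with
  | zero => simp [eq_empty_of_forall_isClique_card_le_zero G hG]
  | succ a iha =>
    induction b generalizing s with
    | zero => simp [eq_empty_of_forall_isClique_card_le_zero Gᶜ hGc]
    | succ b ihb =>
      obtain rfl | ⟨v, hv⟩ := s.eq_empty_or_nonempty
      · exact Nat.choose_pos (by omega)
      have hN := iha (b + 1) ((s.erase v).filter (G.Adj v))
        (forall_isClique_card_le_of_subset_filter_adj G hv hG)
        fun t ht => hGc t (ht.trans ((filter_subset _ _).trans (erase_subset _ _)))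
      have hM := ihb ((s.erase v).filter (Gᶜ.Adj v))
        (fun t ht => hG t (ht.trans ((filter_subset _ _).trans (erase_subset _ _))))
        (forall_isClique_card_le_of_subset_filter_adj Gᶜ hv hGc)
      have hpascal : (a + 1 + (b + 1)).choose (a + 1)
          = (a + (b + 1)).choose a + (a + 1 + b).choose (a + 1) := by
        rw [show a + 1 + (b + 1) = a + b + 1 + 1 by omega, Nat.choose_succ_succ,
          show a + (b + 1) = a + b + 1 by omega, show a + 1 + b = a + b + 1 by omega]
      have := card_filter_adj_add_card_filter_compl_adj G hv
      omega

end Ramsey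

lemma card_le_four_pow_indepNum_of_iso_compl {V : Type*} [Fintype V] (G : SimpleGraph V)
    (φ : G ≃g Gᶜ) : Fintype.card V ≤ 4 ^ indepNum G := by
  have h := card_lt_choose_of_forall_isClique_card_le G (indepNum G) (indepNum G) univ
    (fun _ _ => card_le_indepNum_of_isClique_of_iso_compl G φ)
    (fun _ _ ht => card_le_indepNum_of_isIndepSet (G.isClique_compl.1 ht))
  rw [← two_mul, ← Nat.centralBinom_eq_two_mul_choose, card_univ] at h
  exact h.le.trans (Nat.centralBinom_le_four_pow _)

section ShannonCapacity

variable {V : Type*} [Fintype V] (G : SimpleGraph V)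

lemma indepNum_strongPow_rpow_le_card (m : ℕ+) :
    (indepNum (strongPow G m) : ℝ) ^ ((1 : ℝ) / (m : ℕ)) ≤ Fintype.card V := by
  have hcard : indepNum (strongPow G m) ≤ Fintype.card V ^ (m : ℕ) := by
    simpa using indepNum_le_card (strongPow G m)
  calc (indepNum (strongPow G m) : ℝ) ^ ((1 : ℝ) / (m : ℕ))
      ≤ ((Fintype.card V : ℝ) ^ (m : ℕ)) ^ ((1 : ℝ) / (m : ℕ)) :=
        Real.rpow_le_rpow (by positivity) (by exact_mod_cast hcard) (by positivity)
    _ = Fintype.card V := by rw [one_div, Real.pow_rpow_inv_natCast (by positivity) m.ne_zero]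

lemma shannonCapacity_le_card : shannonCapacity G ≤ Fintype.card V :=
  ciSup_le (indepNum_strongPow_rpow_le_card G)

lemma indepNum_strongPow_rpow_le_shannonCapacity (m : ℕ+) :
    (indepNum (strongPow G m) : ℝ) ^ ((1 : ℝ) / (m : ℕ)) ≤ shannonCapacity G :=
  le_ciSup
    ⟨(Fintype.card V : ℝ), Set.forall_mem_range.2 (indepNum_strongPow_rpow_le_card G)⟩ m

lemma card_le_indepNum_strongPow_two_of_iso_compl (φ : G ≃g Gᶜ) :
    Fintype.card V ≤ indepNum (strongPow G 2) := by
  let diag : V ↪ (Fin 2 → V) :=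
    ⟨fun v => ![v, φ v], fun v w h => by simpa using congrFun h 0⟩
  have hindep : (strongPow G 2).IsIndepSet (univ.map diag : Set (Fin 2 → V)) := by
    rw [coe_map, coe_univ, Set.image_univ]
    rintro _ ⟨v, rfl⟩ _ ⟨w, rfl⟩ hne ⟨-, hadj⟩
    have hvw : v ≠ w := fun h => hne (h ▸ rfl)
    have hG : G.Adj v w := (hadj 0).resolve_left hvw
    have hφ : G.Adj (φ v) (φ w) := (hadj 1).resolve_left (φ.injective.ne hvw)
    exact (φ.map_rel_iff.2 hG).2 hφ
  simpa using card_le_indepNum_of_isIndepSet hindep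

lemma sqrt_card_le_shannonCapacity_of_iso_compl (φ : G ≃g Gᶜ) :
    √(Fintype.card V : ℝ) ≤ shannonCapacity G := by
  have hcard : (Fintype.card V : ℝ) ≤ indepNum (strongPow G (2 : ℕ+)) := by
    exact_mod_cast card_le_indepNum_strongPow_two_of_iso_compl G φ
  calc √(Fintype.card V : ℝ)
      ≤ (indepNum (strongPow G (2 : ℕ+)) : ℝ) ^ ((1 : ℝ) / ((2 : ℕ+) : ℕ)) := by
        rw [Real.sqrt_eq_rpow]
        exact Real.rpow_le_rpow (by positivity) hcard (by positivity)
    _ ≤ shannonCapacity G := indepNum_strongPow_rpow_le_shannonCapacity G 2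

end ShannonCapacity

lemma le_sixteen_mul_rpow_of_le_four_rpow {x k : ℝ} (hx : 0 ≤ x) (hk : 0 < k + 1)
    (h : x ≤ 4 ^ (k + 1)) : x ≤ 16 * x ^ ((k - 1) / (k + 1)) := by
  obtain rfl | hx := hx.eq_or_lt
  · positivity
  have hsmall : x ^ (2 / (k + 1)) ≤ 16 :=
    calc x ^ (2 / (k + 1)) ≤ ((4 : ℝ) ^ (k + 1)) ^ (2 / (k + 1)) :=
          Real.rpow_le_rpow hx.le h (by positivity)
      _ = 16 := by rw [← Real.rpow_mul (by norm_num), mul_div_cancel₀ _ hk.ne']; norm_num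
  calc x = x ^ ((k - 1) / (k + 1)) * x ^ (2 / (k + 1)) := by
        rw [← Real.rpow_add hx, ← add_div, show k - 1 + 2 = k + 1 by ring, div_self hk.ne',
          Real.rpow_one]
    _ ≤ x ^ ((k - 1) / (k + 1)) * 16 := by gcongr
    _ = 16 * x ^ ((k - 1) / (k + 1)) := mul_comm _ _

theorem stmt1 {V : Type*} [Fintype V] (G : SimpleGraph V) (n k : ℕ)
    (hn : Fintype.card V = n) (hsc : Nonempty (G ≃g Gᶜ)) (hk : indepNum G = k) :
    Real.sqrt n ≤ shannonCapacity G ∧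
    shannonCapacity G ≤ 16 * (n : ℝ) ^ (((k : ℝ) - 1) / ((k : ℝ) + 1)) := by
  obtain ⟨φ⟩ := hsc
  subst hn hk
  refine ⟨sqrt_card_le_shannonCapacity_of_iso_compl G φ, (shannonCapacity_le_card G).trans
    (le_sixteen_mul_rpow_of_le_four_rpow (by positivity) (by positivity) ?_)⟩
  calc (Fintype.card V : ℝ) ≤ (4 : ℝ) ^ indepNum G := by
        exact_mod_cast card_le_four_pow_indepNum_of_iso_compl G φ
    _ ≤ (4 : ℝ) ^ (indepNum G + 1) := pow_le_pow_right₀ (by norm_num) (Nat.le_succ _)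
    _ = (4 : ℝ) ^ ((indepNum G : ℝ) + 1) := by rw [← Real.rpow_natCast]; push_cast; rfl
end

section
/- Let m and n be integers with 2 ≤ m < n, and let G be a finite simple graph that is strongly regular with parameters (n², m(n−1), m²−3m+n, m(m−1)) (i.e., G is a Latin square graph LS_m(n) or, more generally, any pseudo Latin square graph with these parameters). Then θ(G) = n and θ(Ḡ) = n, where Ḡ is the complement of G. -/
open scoped Classical

noncomputable def lovaszTheta {V : Type*} [Fintype V] (G : SimpleGraph V) : ℝ :=
  sSup { x : ℝ | ∃ B : Matrix V V ℝ, B.PosSemidef ∧ B.trace = 1 ∧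
    (∀ i j, G.Adj i j → B i j = 0) ∧ x = ∑ i, ∑ j, B i j }

noncomputable def nbhd {V : Type*} [Fintype V] (G : SimpleGraph V) (v : V) : Finset V :=
  Finset.univ.filter fun w => G.Adj v w

/-- `G` is strongly regular with parameters `(n, d, l, m)`: it has `n` vertices, is
`d`-regular, adjacent vertices have `l` common neighbors, distinct nonadjacent vertices
have `m` common neighbors, and `G` is neither complete nor empty. -/
def IsSRG {V : Type*} [Fintype V] (G : SimpleGraph V) (n d l m : ℕ) : Prop :=
  Fintype.card V = n ∧
  (∀ v, (nbhd G v).card = d) ∧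
  (∀ v w, G.Adj v w → (nbhd G v ∩ nbhd G w).card = l) ∧
  (∀ v w, v ≠ w → ¬ G.Adj v w → (nbhd G v ∩ nbhd G w).card = m) ∧
  G ≠ ⊤ ∧ G ≠ ⊥

/-!
Let `A` be the adjacency matrix of `G` and `J` the all-ones matrix. The strongly regular identities
make `N = A + m I - (m / n) J` satisfy `N² = n N`, so `N` is positive semidefinite. Hence
`(n / m) N = n I - J + (n / m) A` is a dual certificate showing `θ(G) ≤ n`, while
`(A + m I) / (m n²) = (N + (m / n) J) / (m n²)` is feasible for `Gᶜ` with entry sum `n`, showing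
`θ(Gᶜ) ≥ n`. The complement satisfies the same identities with `m` replaced by `n + 1 - m`, so the
same two matrices built from `Gᶜ` give the remaining two inequalities.
-/

section LatinSquareType

open Matrix SimpleGraph

theorem SimpleGraph.adjMatrix_compl_eq {V : Type*} [DecidableEq V] (G : SimpleGraph V)
    [DecidableRel G.Adj] : Gᶜ.adjMatrix ℝ = of 1 - 1 - G.adjMatrix ℝ := by
  rw [← G.compl_adjMatrix_eq_adjMatrix_compl ℝ,
    ← G.one_add_adjMatrix_add_compl_adjMatrix_eq_of_one ℝ]
  abel

variable {V : Type*} [Fintype V]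

namespace Matrix

theorem PosSemidef.sum_sum_nonneg {M : Matrix V V ℝ} (hM : M.PosSemidef) :
    0 ≤ ∑ i, ∑ j, M i j := by
  simpa [dotProduct, mulVec, Finset.mul_sum] using hM.dotProduct_mulVec_nonneg 1

theorem posSemidef_of_mul_self_eq_smul {N : Matrix V V ℝ} (hN : N.IsSymm) {c : ℝ} (hc : 0 < c)
    (h : N * N = c • N) : N.PosSemidef := by
  have hNc : N = c⁻¹ • (Nᴴ * N) := by
    rw [conjTranspose_eq_transpose_of_trivial, hN.eq, h, smul_smul, inv_mul_cancel₀ hc.ne',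
      one_smul]
  rw [hNc]
  exact (posSemidef_conjTranspose_mul_self N).smul (inv_nonneg.mpr hc.le)

theorem of_one_mul_of_one :
    (of 1 : Matrix V V ℝ) * of 1 = (Fintype.card V : ℝ) • of 1 := by
  ext i j
  simp [mul_apply]

theorem trace_of_one : (of 1 : Matrix V V ℝ).trace = Fintype.card V := by
  simp [trace]

theorem trace_mul_of_one (M : Matrix V V ℝ) : (M * of 1).trace = ∑ i, ∑ j, M i j := by
  simp [trace, mul_apply]

end Matrix

theorem IsSRG.isSRGWith {G : SimpleGraph V} [DecidableRel G.Adj] {n d l m : ℕ}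
    (h : IsSRG G n d l m) :
    G.IsSRGWith n d l m := by
  obtain ⟨hcard, hdeg, hadj, hnadj, -, -⟩ := h
  have hnbhd : ∀ v, nbhd G v = G.neighborFinset v := fun v => by
    ext w; simp [nbhd]
  have hcommon : ∀ v w, Fintype.card (G.commonNeighbors v w) = (nbhd G v ∩ nbhd G w).card := by
    intro v w
    rw [← Set.toFinset_card]; congr 1; ext u; simp [nbhd, mem_commonNeighbors]
  refine ⟨hcard, fun v => ?_, fun v w hvw => ?_, fun v w hne hvw => ?_⟩
  · rw [← card_neighborFinset_eq_degree, ← hnbhd, hdeg]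
  · rw [hcommon, hadj v w hvw]
  · rw [hcommon, hnadj v w hne hvw]

variable [DecidableEq V]

section DualCertificate

variable {G : SimpleGraph V} {b : ℝ} {Y B : Matrix V V ℝ}

theorem sum_sum_le_of_dual_certificate (hY : ∀ i j, ¬G.Adj i j → Y i j = 0)
    (hP : (b • 1 - of 1 + Y).PosSemidef) (hB : B.PosSemidef) (htr : B.trace = 1)
    (hBG : ∀ i j, G.Adj i j → B i j = 0) : ∑ i, ∑ j, B i j ≤ b := by
  have hBY : ∀ i j, B i j * Y i j = 0 := fun i j => by
    by_cases hij : G.Adj i j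
    · rw [hBG i j hij, zero_mul]
    · rw [hY i j hij, mul_zero]
  have hpair :
      ∑ i, ∑ j, (B ⊙ (b • 1 - of 1 + Y)) i j = b * B.trace - ∑ i, ∑ j, B i j := by
    simp [mul_add, mul_sub, one_apply, hBY, Finset.sum_sub_distrib, trace, Finset.sum_mul,
      mul_comm b]
  have := (hB.hadamard hP).sum_sum_nonneg
  rw [hpair, htr] at this
  linarith

theorem lovaszTheta_eq_of_dual_certificate (hY : ∀ i j, ¬G.Adj i j → Y i j = 0)
    (hP : (b • 1 - of 1 + Y).PosSemidef) (hB : B.PosSemidef) (htr : B.trace = 1)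
    (hBG : ∀ i j, G.Adj i j → B i j = 0) (hsum : ∑ i, ∑ j, B i j = b) :
    lovaszTheta G = b := by
  refine IsGreatest.csSup_eq ⟨⟨B, hB, htr, hBG, hsum.symm⟩, ?_⟩
  rintro _ ⟨B', hB', htr', hB'G, rfl⟩
  exact sum_sum_le_of_dual_certificate hY hP hB' htr' hB'G

end DualCertificate

/-- The identities `A J = k J` and `A² = k I + λ A + μ (J - I - A)` for the adjacency matrix of a
strongly regular graph with parameters `(n², m (n - 1), m² - 3 m + n, m (m - 1))`. -/
structure IsLatinSquareType (G : SimpleGraph V) [DecidableRel G.Adj] (m n : ℝ) : Prop where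
  card_eq : (Fintype.card V : ℝ) = n ^ 2
  adjMatrix_mul_of_one : G.adjMatrix ℝ * of 1 = (m * (n - 1)) • of 1
  adjMatrix_mul_self : G.adjMatrix ℝ * G.adjMatrix ℝ =
    (m * (n - m)) • 1 + (n - 2 * m) • G.adjMatrix ℝ + (m * (m - 1)) • of 1

theorem SimpleGraph.IsSRGWith.isLatinSquareType {G : SimpleGraph V} [DecidableRel G.Adj]
    {m n : ℕ} (hm : 2 ≤ m) (hmn : m ≤ n)
    (h : G.IsSRGWith (n ^ 2) (m * (n - 1)) (m ^ 2 + n - 3 * m) (m * (m - 1))) :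
    IsLatinSquareType G m n := by
  have hn : 1 ≤ n := by omega
  have hℓ : 3 * m ≤ m ^ 2 + n := by nlinarith
  refine ⟨by simp [h.card], ?_, ?_⟩
  · ext i j
    simp [mul_apply, ← neighborFinset_eq_filter, h.regular i, Nat.cast_sub hn]
  · rw [← sq, h.matrix_eq, adjMatrix_compl_eq, ← Nat.cast_smul_eq_nsmul ℝ,
      ← Nat.cast_smul_eq_nsmul ℝ, ← Nat.cast_smul_eq_nsmul ℝ]
    push_cast [Nat.cast_sub hn, Nat.cast_sub hℓ, Nat.cast_sub (by omega : 1 ≤ m)]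
    module

namespace IsLatinSquareType

variable {G : SimpleGraph V} [DecidableRel G.Adj] {m n : ℝ}

theorem of_one_mul_adjMatrix (h : IsLatinSquareType G m n) :
    of 1 * G.adjMatrix ℝ = (m * (n - 1)) • of 1 := by
  have := congrArg transpose h.adjMatrix_mul_of_one
  rwa [transpose_mul, transpose_smul, transpose_adjMatrix] at this

theorem of_one_mul_of_one (h : IsLatinSquareType G m n) :
    (of 1 : Matrix V V ℝ) * of 1 = (n ^ 2) • of 1 := by
  rw [Matrix.of_one_mul_of_one, h.card_eq]

theorem compl (h : IsLatinSquareType G m n) :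
    IsLatinSquareType Gᶜ (n + 1 - m) n := by
  refine ⟨h.card_eq, ?_, ?_⟩
  · simp only [adjMatrix_compl_eq, sub_mul, one_mul, h.adjMatrix_mul_of_one, h.of_one_mul_of_one]
    module
  · simp only [adjMatrix_compl_eq, sub_mul, mul_sub, one_mul, mul_one, h.adjMatrix_mul_of_one,
      h.of_one_mul_adjMatrix, h.of_one_mul_of_one, h.adjMatrix_mul_self]
    module

theorem posSemidef (h : IsLatinSquareType G m n) (hn : 0 < n) :
    (G.adjMatrix ℝ + m • 1 - (m / n) • of 1).PosSemidef := by
  -- this is `n` times the orthogonal projection onto the `(n - m)`-eigenspace of `A`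
  refine posSemidef_of_mul_self_eq_smul ?_ hn ?_
  · simp only [IsSymm, transpose_add, transpose_sub, transpose_smul, transpose_one,
      transpose_adjMatrix]
    rfl
  · simp only [add_mul, sub_mul, mul_add, mul_sub, smul_mul_assoc, mul_smul_comm, one_mul,
      mul_one, h.adjMatrix_mul_self, h.adjMatrix_mul_of_one, h.of_one_mul_adjMatrix,
      h.of_one_mul_of_one]
    match_scalars <;> field_simp <;> ring

theorem lovaszTheta_compl_eq (h : IsLatinSquareType G m n) (hm : 0 < m) (hmn : m < n + 1)
    (hn : 0 < n) : lovaszTheta Gᶜ = n := by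
  have hm' : 0 < n + 1 - m := by linarith
  have hJ : (of 1 : Matrix V V ℝ).PosSemidef :=
    posSemidef_of_mul_self_eq_smul rfl (by positivity) h.of_one_mul_of_one
  refine lovaszTheta_eq_of_dual_certificate (Y := (n / (n + 1 - m)) • Gᶜ.adjMatrix ℝ)
    (B := (m * n ^ 2)⁻¹ • (G.adjMatrix ℝ + m • 1)) ?_ ?_ ?_ ?_ ?_ ?_
  · intro i j hij
    simp [hij]
  · have hP : n • (1 : Matrix V V ℝ) - of 1 + (n / (n + 1 - m)) • Gᶜ.adjMatrix ℝ =
        (n / (n + 1 - m)) •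
          (Gᶜ.adjMatrix ℝ + (n + 1 - m) • 1 - ((n + 1 - m) / n) • of 1) := by
      match_scalars <;> field_simp
    rw [hP]
    exact (h.compl.posSemidef hn).smul (by positivity)
  · have hA : G.adjMatrix ℝ + m • 1 =
        (G.adjMatrix ℝ + m • 1 - (m / n) • of 1) + (m / n) • of 1 := by abel
    rw [hA]
    exact ((h.posSemidef hn).add (hJ.smul (by positivity))).smul (by positivity)
  · simp [trace_adjMatrix, h.card_eq]
    field_simp
  · intro i j hij
    simp [(compl_adj G i j).mp hij, one_apply]
  · rw [← trace_mul_of_one, smul_mul_assoc, add_mul, h.adjMatrix_mul_of_one, smul_mul_assoc,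
      one_mul, ← add_smul, trace_smul, trace_smul, trace_of_one, h.card_eq, smul_eq_mul,
      smul_eq_mul]
    field_simp
    ring

end IsLatinSquareType

end LatinSquareType

theorem stmt3 {V : Type*} [Fintype V] (G : SimpleGraph V) (m n : ℕ)
    (hm : 2 ≤ m) (hmn : m < n)
    (h : IsSRG G (n ^ 2) (m * (n - 1)) (m ^ 2 + n - 3 * m) (m * (m - 1))) :
    lovaszTheta G = (n : ℝ) ∧ lovaszTheta Gᶜ = (n : ℝ) := by
  have hG := h.isSRGWith.isLatinSquareType hm hmn.le
  have hm₀ : (0 : ℝ) < m := by positivity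
  have hmn' : (m : ℝ) < n := by exact_mod_cast hmn
  have hn₀ : (0 : ℝ) < n := hm₀.trans hmn'
  refine ⟨?_, hG.lovaszTheta_compl_eq hm₀ (by linarith) hn₀⟩
  simpa using hG.compl.lovaszTheta_compl_eq (by linarith) (by linarith) hn₀
end

section
/- Let G₁ and G₂ be finite simple graphs with nonempty disjoint vertex sets. Then ω(G₁ ▽ G₂) = ω(G₁) + ω(G₂) = ω(G₁ ⊻ G₂) and χ(G₁ ▽ G₂) = χ(G₁) + χ(G₂) = χ(G₁ ⊻ G₂), where ▽ denotes the neighbors-splitting join and ⊻ denotes the non-neighbors-splitting join. -/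
open scoped Classical

noncomputable def cliqueNum {V : Type*} [Fintype V] (G : SimpleGraph V) : ℕ :=
  sSup { n : ℕ | ∃ s : Finset V, (∀ i ∈ s, ∀ j ∈ s, i ≠ j → G.Adj i j) ∧ s.card = n }

/-- The neighbors-splitting (NS) join of `G₁` and `G₂`: vertices are the vertices of
`G₁` (first summand), the primed copies of the vertices of `G₁` (second summand), and
the vertices of `G₂` (third summand). -/
def nsJoin {α β : Type*} (G₁ : SimpleGraph α) (G₂ : SimpleGraph β) :
    SimpleGraph (α ⊕ α ⊕ β) where
  Adj x y :=
    match x, y with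
    | .inl u, .inl v => G₁.Adj u v
    | .inl u, .inr (.inl v) => G₁.Adj u v
    | .inr (.inl u), .inl v => G₁.Adj u v
    | .inl _, .inr (.inr _) => True
    | .inr (.inr _), .inl _ => True
    | .inr (.inr b), .inr (.inr c) => G₂.Adj b c
    | _, _ => False
  symm := by
    constructor
    rintro (u|u|b) (v|v|c) h
    · exact G₁.adj_symm h
    · exact G₁.adj_symm h
    · trivial
    · exact G₁.adj_symm h
    · exact h
    · exact h
    · trivial
    · exact h
    · exact G₂.adj_symm h
  loopless := by
    constructor
    rintro (u|u|b) h
    · exact G₁.irrefl h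
    · exact h
    · exact G₂.irrefl h

/-- The non-neighbors-splitting (NNS) join of `G₁` and `G₂`: vertices are the vertices
of `G₁` (first summand), the primed copies of the vertices of `G₁` (second summand),
and the vertices of `G₂` (third summand). -/
def nnsJoin {α β : Type*} (G₁ : SimpleGraph α) (G₂ : SimpleGraph β) :
    SimpleGraph (α ⊕ α ⊕ β) where
  Adj x y :=
    match x, y with
    | .inl u, .inl v => G₁.Adj u v
    | .inl u, .inr (.inl v) => u ≠ v ∧ ¬ G₁.Adj u v
    | .inr (.inl u), .inl v => u ≠ v ∧ ¬ G₁.Adj u v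
    | .inl _, .inr (.inr _) => True
    | .inr (.inr _), .inl _ => True
    | .inr (.inr b), .inr (.inr c) => G₂.Adj b c
    | _, _ => False
  symm := by
    constructor
    rintro (u|u|b) (v|v|c) h
    · exact G₁.adj_symm h
    · obtain ⟨h1, h2⟩ := h; exact ⟨Ne.symm h1, fun a => h2 (G₁.adj_symm a)⟩
    · trivial
    · obtain ⟨h1, h2⟩ := h; exact ⟨Ne.symm h1, fun a => h2 (G₁.adj_symm a)⟩
    · exact h
    · exact h
    · trivial
    · exact h
    · exact G₂.adj_symm h
  loopless := by
    constructor
    rintro (u|u|b) h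
    · exact G₁.irrefl h
    · exact h
    · exact G₂.irrefl h

/-!
Both splitting joins are homomorphically equivalent to the ordinary join `G₁.join G₂`, in which
every vertex of `G₁` is adjacent to every vertex of `G₂`. The join sits inside either of them;
`G₁ ▽ G₂` maps onto it by sending `v'ᵢ` to `vᵢ`, and `G₁ ⊻ G₂` by sending every `v'ᵢ` to one fixed
vertex of `G₂`, which is possible because the `v'ᵢ` are pairwise non-adjacent and have no
neighbours in `G₂`. Homomorphisms do not decrease `ω` or `χ`, so both splitting joins have the
clique and chromatic numbers of the join, and these are additive: a clique of the join is a
clique of `G₁` plus a clique of `G₂`, and its two sides need disjoint sets of colours.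
-/

theorem cliqueNum_eq_simpleGraph_cliqueNum {V : Type*} [Fintype V] (G : SimpleGraph V) :
    cliqueNum G = G.cliqueNum := by
  simp only [cliqueNum, SimpleGraph.cliqueNum, SimpleGraph.isNClique_iff,
    SimpleGraph.isClique_iff, Set.Pairwise, Finset.mem_coe]

namespace SimpleGraph

section Hom

variable {U V W : Type*} {G : SimpleGraph V} {H : SimpleGraph W}

theorem cliqueNum_mono_of_hom [Finite W] (f : G →g H) : G.cliqueNum ≤ H.cliqueNum := by
  obtain ⟨s, hs⟩ := G.exists_isNClique_cliqueNum
  have hinj : Set.InjOn f s := fun x hx y hy hxy => by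
    by_contra hne
    have hadj := f.map_adj (hs.isClique hx hy hne)
    rw [hxy] at hadj
    exact H.irrefl hadj
  have hclique : H.IsClique (s.image f : Set W) := by
    rw [Finset.coe_image]
    rintro _ ⟨x, hx, rfl⟩ _ ⟨y, hy, rfl⟩ hne
    exact f.map_adj (hs.isClique hx hy fun h => hne (h ▸ rfl))
  calc G.cliqueNum = (s.image f).card := by rw [Finset.card_image_of_injOn hinj, hs.card_eq]
    _ ≤ H.cliqueNum := hclique.card_le_cliqueNum

theorem cliqueNum_eq_of_hom_of_hom [Finite V] [Finite W] (f : G →g H) (g : H →g G) :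
    G.cliqueNum = H.cliqueNum :=
  le_antisymm (cliqueNum_mono_of_hom f) (cliqueNum_mono_of_hom g)

theorem chromaticNumber_eq_of_hom_of_hom (f : G →g H) (g : H →g G) :
    G.chromaticNumber = H.chromaticNumber :=
  le_antisymm (chromaticNumber_mono_of_hom f) (chromaticNumber_mono_of_hom g)

variable (G) in
theorem exists_colorable_chromaticNumber_eq [Finite V] :
    ∃ n : ℕ, G.Colorable n ∧ G.chromaticNumber = n :=
  ⟨_, G.colorable_chromaticNumber_of_fintype, (ENat.natCast_toNat
    (chromaticNumber_ne_top_iff_exists.2 ⟨_, G.colorable_chromaticNumber_of_fintype⟩)).symm⟩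

theorem Coloring.colorable_card_image [Fintype V] [DecidableEq U] (C : G.Coloring U) :
    G.Colorable (Finset.univ.image C).card := by
  let C' : G.Coloring (Finset.univ.image C) :=
    Coloring.mk (fun v => ⟨C v, Finset.mem_image_of_mem C (Finset.mem_univ v)⟩)
      fun h => by simpa [Subtype.ext_iff] using C.valid h
  simpa using C'.colorable

end Hom

section Join

open Sum

variable {α β : Type*} (G₁ : SimpleGraph α) (G₂ : SimpleGraph β)

def join : SimpleGraph (α ⊕ β) where
  Adj
    | inl u, inl v => G₁.Adj u v
    | inr b, inr c => G₂.Adj b c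
    | _, _ => True
  symm := ⟨by rintro (u|b) (v|c) h; exacts [G₁.adj_symm h, trivial, trivial, G₂.adj_symm h]⟩
  loopless := ⟨by rintro (u|b) h; exacts [G₁.irrefl h, G₂.irrefl h]⟩

variable {G₁ G₂}

@[simp] theorem join_adj_inl_inl {u v : α} : (G₁.join G₂).Adj (inl u) (inl v) ↔ G₁.Adj u v :=
  Iff.rfl

@[simp] theorem join_adj_inr_inr {b c : β} : (G₁.join G₂).Adj (inr b) (inr c) ↔ G₂.Adj b c :=
  Iff.rfl

@[simp] theorem join_adj_inr_inl {u : α} {b : β} : (G₁.join G₂).Adj (inr b) (inl u) :=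
  trivial

variable (G₁ G₂)

def Hom.joinInl : G₁ →g G₁.join G₂ := ⟨inl, id⟩

def Hom.joinInr : G₂ →g G₁.join G₂ := ⟨inr, id⟩

theorem cliqueNum_join [Finite α] [Finite β] :
    (G₁.join G₂).cliqueNum = G₁.cliqueNum + G₂.cliqueNum := by
  apply le_antisymm
  · obtain ⟨s, hs⟩ := (G₁.join G₂).exists_isNClique_cliqueNum
    have h₁ : G₁.IsClique (s.toLeft : Set α) := fun u hu v hv hne => by
      simpa using hs.isClique (Finset.mem_toLeft.1 hu) (Finset.mem_toLeft.1 hv) (by simpa)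
    have h₂ : G₂.IsClique (s.toRight : Set β) := fun b hb c hc hne => by
      simpa using hs.isClique (Finset.mem_toRight.1 hb) (Finset.mem_toRight.1 hc) (by simpa)
    rw [← hs.card_eq, ← Finset.card_toLeft_add_card_toRight]
    exact add_le_add h₁.card_le_cliqueNum h₂.card_le_cliqueNum
  · obtain ⟨s₁, hs₁⟩ := G₁.exists_isNClique_cliqueNum
    obtain ⟨s₂, hs₂⟩ := G₂.exists_isNClique_cliqueNum
    have hs : (G₁.join G₂).IsClique (s₁.disjSum s₂ : Set (α ⊕ β)) := by
      rintro (u|b) hu (v|c) hv hne <;> simp only [Finset.mem_coe, Finset.inl_mem_disjSum,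
        Finset.inr_mem_disjSum] at hu hv
      · exact hs₁.isClique hu hv (by simpa using hne)
      · trivial
      · trivial
      · exact hs₂.isClique hu hv (by simpa using hne)
    rw [← hs₁.card_eq, ← hs₂.card_eq, ← Finset.card_disjSum]
    exact hs.card_le_cliqueNum

variable {G₁ G₂} in
theorem Colorable.join {m n : ℕ} (h₁ : G₁.Colorable m) (h₂ : G₂.Colorable n) :
    (G₁.join G₂).Colorable (m + n) := by
  obtain ⟨C₁⟩ := h₁
  obtain ⟨C₂⟩ := h₂
  let C : (G₁.join G₂).Coloring (Fin m ⊕ Fin n) :=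
    Coloring.mk (Sum.map C₁ C₂) <| by
      rintro (u|b) (v|c) h
      · simpa using C₁.valid h
      · simp
      · simp
      · simpa using C₂.valid h
  simpa using C.colorable

theorem chromaticNumber_join [Finite α] [Finite β] :
    (G₁.join G₂).chromaticNumber = G₁.chromaticNumber + G₂.chromaticNumber := by
  have := Fintype.ofFinite α
  have := Fintype.ofFinite β
  apply le_antisymm
  · obtain ⟨n₁, h₁, hn₁⟩ := G₁.exists_colorable_chromaticNumber_eq
    obtain ⟨n₂, h₂, hn₂⟩ := G₂.exists_colorable_chromaticNumber_eq
    rw [hn₁, hn₂, ← Nat.cast_add]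
    exact (h₁.join h₂).chromaticNumber_le
  · obtain ⟨m, ⟨C⟩, hm⟩ := (G₁.join G₂).exists_colorable_chromaticNumber_eq
    rw [hm]
    set S₁ := Finset.univ.image (C.comp (Hom.joinInl G₁ G₂))
    set S₂ := Finset.univ.image (C.comp (Hom.joinInr G₁ G₂))
    have hdisj : Disjoint S₁ S₂ := by
      simp only [S₁, S₂, Finset.disjoint_left, Finset.mem_image, Finset.mem_univ, true_and]
      rintro _ ⟨u, rfl⟩ ⟨b, hb⟩
      exact C.valid (join_adj_inr_inl (u := u) (b := b)) hb
    calc G₁.chromaticNumber + G₂.chromaticNumber ≤ (S₁.card + S₂.card : ℕ) := by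
          push_cast
          exact add_le_add (Coloring.colorable_card_image _).chromaticNumber_le
            (Coloring.colorable_card_image _).chromaticNumber_le
      _ ≤ m := by
          rw [← Finset.card_union_of_disjoint hdisj]
          exact_mod_cast (Finset.card_le_univ _).trans_eq (Fintype.card_fin m)

end Join

end SimpleGraph

section JoinHoms

open Sum

variable {α β : Type*} (G₁ : SimpleGraph α) (G₂ : SimpleGraph β)

def joinToNsJoin : G₁.join G₂ →g nsJoin G₁ G₂ where
  toFun := Sum.elim inl (inr ∘ inr)
  map_rel' := by rintro (u|b) (v|c) h <;> exact h

def nsJoinToJoin : nsJoin G₁ G₂ →g G₁.join G₂ where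
  toFun := Sum.elim inl (Sum.elim inl inr)
  map_rel' := by
    rintro (u|u|b) (v|v|c) h <;> first | exact h | trivial

def joinToNnsJoin : G₁.join G₂ →g nnsJoin G₁ G₂ where
  toFun := Sum.elim inl (inr ∘ inr)
  map_rel' := by rintro (u|b) (v|c) h <;> exact h

def nnsJoinToJoin (b₀ : β) : nnsJoin G₁ G₂ →g G₁.join G₂ where
  toFun := Sum.elim inl (Sum.elim (fun _ => inr b₀) inr)
  map_rel' := by
    rintro (u|u|b) (v|v|c) h <;> first | exact h | trivial

end JoinHoms

theorem stmt6_general {α β : Type*} [Fintype α] [Fintype β] [Nonempty β]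
    (G₁ : SimpleGraph α) (G₂ : SimpleGraph β) :
    cliqueNum (nsJoin G₁ G₂) = cliqueNum G₁ + cliqueNum G₂ ∧
    cliqueNum (nnsJoin G₁ G₂) = cliqueNum G₁ + cliqueNum G₂ ∧
    (nsJoin G₁ G₂).chromaticNumber = G₁.chromaticNumber + G₂.chromaticNumber ∧
    (nnsJoin G₁ G₂).chromaticNumber = G₁.chromaticNumber + G₂.chromaticNumber := by
  let b₀ : β := Classical.arbitrary β
  simp only [cliqueNum_eq_simpleGraph_cliqueNum, ← SimpleGraph.cliqueNum_join,
    ← SimpleGraph.chromaticNumber_join]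
  exact ⟨SimpleGraph.cliqueNum_eq_of_hom_of_hom (nsJoinToJoin G₁ G₂) (joinToNsJoin G₁ G₂),
    SimpleGraph.cliqueNum_eq_of_hom_of_hom (nnsJoinToJoin G₁ G₂ b₀) (joinToNnsJoin G₁ G₂),
    SimpleGraph.chromaticNumber_eq_of_hom_of_hom (nsJoinToJoin G₁ G₂) (joinToNsJoin G₁ G₂),
    SimpleGraph.chromaticNumber_eq_of_hom_of_hom (nnsJoinToJoin G₁ G₂ b₀) (joinToNnsJoin G₁ G₂)⟩

theorem stmt6 {α β : Type*} [Fintype α] [Fintype β] [Nonempty α] [Nonempty β]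
    (G₁ : SimpleGraph α) (G₂ : SimpleGraph β) :
    cliqueNum (nsJoin G₁ G₂) = cliqueNum G₁ + cliqueNum G₂ ∧
    cliqueNum (nnsJoin G₁ G₂) = cliqueNum G₁ + cliqueNum G₂ ∧
    (nsJoin G₁ G₂).chromaticNumber = G₁.chromaticNumber + G₂.chromaticNumber ∧
    (nnsJoin G₁ G₂).chromaticNumber = G₁.chromaticNumber + G₂.chromaticNumber :=
  stmt6_general G₁ G₂
end

section
/- Let G₁ and G₂ be finite simple graphs with nonempty disjoint vertex sets, and let n₁ = |V(G₁)|. Then α(G₁ ▽ G₂) ≥ n₁ + α(G₂) and α(G₁ ⊻ G₂) ≥ n₁ + α(G₂), where ▽ denotes the neighbors-splitting join and ⊻ denotes the non-neighbors-splitting join. -/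
/-!
In both joins the primed vertices are pairwise nonadjacent and nonadjacent to `V(G₂)`, so the
primed vertices and `G₂` induce the disjoint union of the edgeless graph on `n₁` vertices and `G₂`.
Hence all primed vertices together with a maximum independent set of `G₂` are independent.
-/

open scoped Classical

open Finset

theorem indepNum_eq_simpleGraph_indepNum {V : Type*} [Fintype V] (G : SimpleGraph V) :
    indepNum G = G.indepNum := by
  unfold indepNum SimpleGraph.indepNum
  congr! 3 with n
  exact exists_congr fun _ => ⟨fun ⟨hs, hn⟩ => ⟨hs, hn⟩, fun ⟨hs, hn⟩ => ⟨hs, hn⟩⟩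

namespace SimpleGraph

variable {V W : Type*}

theorem card_le_indepNum_bot [Fintype V] : Fintype.card V ≤ (⊥ : SimpleGraph V).indepNum := by
  simpa using (show (⊥ : SimpleGraph V).IsIndepSet (univ : Finset V) from
    fun _ _ _ _ _ => id).card_le_indepNum

theorem IsIndepSet.disjSum {G : SimpleGraph V} {H : SimpleGraph W} {s : Finset V} {t : Finset W}
    (hs : G.IsIndepSet s) (ht : H.IsIndepSet t) : (G ⊕g H).IsIndepSet (s.disjSum t) := by
  rintro (v | w) hx (v' | w') hy hne <;>
    simp only [mem_coe, inl_mem_disjSum, inr_mem_disjSum] at hx hy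
  · exact hs hx hy (ne_of_apply_ne _ hne)
  · exact not_adj_sum_inl_inr v w'
  · exact fun h => not_adj_sum_inl_inr (G := G) (H := H) v' w h.symm
  · exact ht hx hy (ne_of_apply_ne _ hne)

theorem indepNum_add_indepNum_le_indepNum_sum [Finite V] [Finite W] (G : SimpleGraph V)
    (H : SimpleGraph W) : G.indepNum + H.indepNum ≤ (G ⊕g H).indepNum := by
  obtain ⟨s, hs⟩ := G.exists_isNIndepSet_indepNum
  obtain ⟨t, ht⟩ := H.exists_isNIndepSet_indepNum
  simpa [card_disjSum, hs.card_eq, ht.card_eq] using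
    (hs.isIndepSet.disjSum ht.isIndepSet).card_le_indepNum

theorem Embedding.indepNum_le [Finite W] {G : SimpleGraph V} {H : SimpleGraph W} (f : G ↪g H) :
    G.indepNum ≤ H.indepNum := by
  obtain ⟨s, hs⟩ := G.exists_isNIndepSet_indepNum
  have hmap : H.IsIndepSet (s.map f.toEmbedding) := by
    simp only [coe_map]
    exact Set.Pairwise.image fun _ ha _ hb hab => f.map_adj_iff.not.mpr (hs.isIndepSet ha hb hab)
  simpa [hs.card_eq] using hmap.card_le_indepNum

end SimpleGraph

section Joins

variable {α β : Type*} (G₁ : SimpleGraph α) (G₂ : SimpleGraph β)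

def primedEmbeddingNsJoin : (⊥ : SimpleGraph α) ⊕g G₂ ↪g nsJoin G₁ G₂ where
  toEmbedding := Function.Embedding.inr
  map_rel_iff' {x y} := by cases x <;> cases y <;> simp [nsJoin]

def primedEmbeddingNnsJoin : (⊥ : SimpleGraph α) ⊕g G₂ ↪g nnsJoin G₁ G₂ where
  toEmbedding := Function.Embedding.inr
  map_rel_iff' {x y} := by cases x <;> cases y <;> simp [nnsJoin]

theorem card_add_indepNum_le_of_embedding [Fintype α] [Fintype β] {γ : Type*} [Fintype γ]
    {H : SimpleGraph γ} (f : (⊥ : SimpleGraph α) ⊕g G₂ ↪g H) :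
    Fintype.card α + indepNum G₂ ≤ indepNum H := by
  rw [indepNum_eq_simpleGraph_indepNum, indepNum_eq_simpleGraph_indepNum]
  calc Fintype.card α + G₂.indepNum
      ≤ (⊥ : SimpleGraph α).indepNum + G₂.indepNum :=
        Nat.add_le_add_right SimpleGraph.card_le_indepNum_bot _
    _ ≤ ((⊥ : SimpleGraph α) ⊕g G₂).indepNum :=
      SimpleGraph.indepNum_add_indepNum_le_indepNum_sum _ _
    _ ≤ H.indepNum := f.indepNum_le

end Joins

theorem stmt7_general {α β : Type*} [Fintype α] [Fintype β]
    (G₁ : SimpleGraph α) (G₂ : SimpleGraph β) :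
    Fintype.card α + indepNum G₂ ≤ indepNum (nsJoin G₁ G₂) ∧
    Fintype.card α + indepNum G₂ ≤ indepNum (nnsJoin G₁ G₂) :=
  ⟨card_add_indepNum_le_of_embedding G₂ (primedEmbeddingNsJoin G₁ G₂),
    card_add_indepNum_le_of_embedding G₂ (primedEmbeddingNnsJoin G₁ G₂)⟩

theorem stmt7 {α β : Type*} [Fintype α] [Fintype β] [Nonempty α] [Nonempty β]
    (G₁ : SimpleGraph α) (G₂ : SimpleGraph β) :
    Fintype.card α + indepNum G₂ ≤ indepNum (nsJoin G₁ G₂) ∧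
    Fintype.card α + indepNum G₂ ≤ indepNum (nnsJoin G₁ G₂) :=
  stmt7_general G₁ G₂
end

section
/- Let G be a finite simple graph that is strongly regular with parameters (n, d, λ, μ), and set t := √((μ−λ)² + 4(d−μ)). Then: α(G) ≤ ⌊n(t+μ−λ)/(2d+t+μ−λ)⌋; ω(G) ≤ 1 + ⌊2d/(t+μ−λ)⌋; χ(G) ≥ 1 + ⌈2d/(t+μ−λ)⌉; and χ(Ḡ) ≥ ⌈n(t+μ−λ)/(2d+t+μ−λ)⌉, where Ḡ is the complement of G. -/
open scoped Classical

section Aux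

open Finset

lemma key_quad (a r q2 q1 q0 : ℝ) (h2 : 0 ≤ q2) (ha : 0 < a) (hr : 0 < r) (h0 : q0 ≤ 0)
    (hQa : q2*a^2 + q1*a + q0 ≤ 0) (hQr : q2*r^2 + q1*r + q0 = 0)
    (hlin : q2 = 0 → 0 < q1) : a ≤ r := by
  by_contra hcon
  push_neg at hcon
  rcases eq_or_lt_of_le h2 with h2' | h2'
  · have hq1 := hlin h2'.symm
    nlinarith
  · have h3 : q2*(a+r) + q1 ≤ 0 := by nlinarith
    have h4 : 0 ≤ q2*r + q1 := by nlinarith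
    nlinarith

lemma algGen (a q2 q1 q0 A B : ℝ) (ha1 : 1 ≤ a) (hq2 : 0 ≤ q2) (hq0 : q0 ≤ 0)
    (hnum : 0 < A) (hden : 0 < B)
    (hQ : q2*a^2 + q1*a + q0 ≤ 0)
    (hE : q2*A^2 + q1*A*B + q0*B^2 = 0)
    (hlin : q2 = 0 → 0 < q1) : a*B ≤ A := by
  have hfrac : q2*(A/B)^2 + q1*(A/B) + q0 = (q2*A^2 + q1*A*B + q0*B^2)/B^2 := by
    field_simp
  have hQr : q2*(A/B)^2 + q1*(A/B) + q0 = 0 := by rw [hfrac, hE, zero_div]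
  have key := key_quad a (A/B) q2 q1 q0 hq2 (by linarith) (div_pos hnum hden) hq0 hQ hQr hlin
  exact (le_div_iff₀ hden).mp key

lemma spos (n d l m t : ℝ) (hd : 1 ≤ d) (hmd : m ≤ d) (hdn : d + 2 ≤ n)
    (hid : d*(d-l-1) = (n-d-1)*m) (ht0 : 0 ≤ t)
    (ht2 : t^2 = (m-l)^2 + 4*(d-m)) : 0 < t + m - l := by
  rcases lt_or_eq_of_le hmd with h | h
  · nlinarith [sq_nonneg (t + m - l), sq_nonneg (t - m + l)]
  · have hl : l = 2*d - n := by
      have h1 : d*(2*d - l - n) = 0 := by nlinarith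
      have h2 : (2*d - l - n) = 0 := by
        rcases mul_eq_zero.mp h1 with h' | h'
        · linarith
        · exact h'
      linarith
    have hml : 0 < m - l := by rw [hl, ← h]; linarith
    nlinarith

lemma alg1 (n d l m t a : ℝ) (hd : 1 ≤ d) (hm0 : 0 ≤ m) (hmd : m ≤ d) (hdn : d + 2 ≤ n)
    (hid : d*(d-l-1) = (n-d-1)*m) (ht0 : 0 ≤ t) (ht2 : t^2 = (m-l)^2 + 4*(d-m))
    (ha1 : 1 ≤ a) (hQ : a*d^2 ≤ (n-a)*(d + (a-1)*m)) (hs : 0 < t + m - l) :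
    a*(2*d + t + m - l) ≤ n*(t + m - l) := by
  have hfin : a*(2*d + (t+m-l)) ≤ n*(t+m-l) := by
    refine algGen a m (d^2+d-m-n*m) (n*(m-d)) (n*(t+m-l)) (2*d+(t+m-l))
      ha1 hm0 (by nlinarith) (by nlinarith) (by linarith) (by nlinarith) ?_ ?_
    · linear_combination (n*d^2) * ht2 + (2*n*d*(t+m-l)) * hid
    · intro hm; nlinarith
  linarith [hfin]

lemma alg2 (n d l m t a : ℝ) (hd : 1 ≤ d) (hmd : m ≤ d) (hdn : d + 2 ≤ n)
    (hld : l + 1 ≤ d) (hn2dl : 0 ≤ n - 2*d + l)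
    (hid : d*(d-l-1) = (n-d-1)*m) (ht2 : t^2 = (m-l)^2 + 4*(d-m))
    (ha1 : 1 ≤ a)
    (hQ : a*(n-1-d)^2 ≤ (n-a)*((n-1-d) + (a-1)*(n-2*d+l)))
    (hs : 0 < t + m - l) :
    a*(t + m - l) ≤ (t + m - l) + 2*d := by
  have hfin : a*(t+m-l) ≤ ((t+m-l)+2*d) := by
    refine algGen a (n-2*d+l)
      ((n-1-d)^2+(n-1-d)-(n-2*d+l)-n*(n-2*d+l)) (n*((n-2*d+l)-(n-1-d)))
      ((t+m-l)+2*d) (t+m-l)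
      ha1 hn2dl (by nlinarith) (by nlinarith) hs (by nlinarith) ?_ ?_
    · linear_combination (d+d^2-n*d) * ht2 + (2*d*(t+m-l)-4*d) * hid
    · intro hm; nlinarith
  linarith [hfin]

lemma mem_nbhd {V : Type*} [Fintype V] (G : SimpleGraph V) (v w : V) :
    w ∈ nbhd G v ↔ G.Adj v w := by simp [nbhd]

lemma lemA {V : Type*} [Fintype V] (G : SimpleGraph V) (D M : ℤ)
    (hd : ∀ v, ((nbhd G v).card : ℤ) = D)
    (hm : ∀ v w, v ≠ w → ¬ G.Adj v w → ((nbhd G v ∩ nbhd G w).card : ℤ) = M)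
    (S : Finset V) (hS : ∀ i ∈ S, ∀ j ∈ S, i ≠ j → ¬ G.Adj i j) :
    ((S.card : ℤ) * D)^2 ≤
      ((Fintype.card V : ℤ) - S.card) * (S.card * D + S.card * (S.card - 1) * M) := by
  set T : Finset V := Finset.univ \ S with hT
  have hsub : ∀ u ∈ S, nbhd G u ⊆ T := by
    intro u hu w hw
    rw [mem_nbhd] at hw
    simp only [hT, mem_sdiff, mem_univ, true_and]
    intro hwS
    exact hS u hu w hwS (G.ne_of_adj hw) hw
  have e_eq : ∀ v, ((nbhd G v ∩ S).card : ℤ) = ∑ u ∈ S, if G.Adj v u then (1:ℤ) else 0 := by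
    intro v
    have h1 : nbhd G v ∩ S = S.filter (fun u => G.Adj v u) := by
      ext u; simp [mem_nbhd, and_comm, nbhd]
    rw [h1, Finset.sum_boole]
  have filt1 : ∀ u ∈ S, T.filter (fun v => G.Adj v u) = nbhd G u := by
    intro u hu
    ext v
    simp only [mem_filter, mem_nbhd]
    constructor
    · rintro ⟨-, h⟩; exact h.symm
    · intro h; exact ⟨hsub u hu (by rwa [mem_nbhd]), h.symm⟩
  have step1 : ∑ v ∈ T, ((nbhd G v ∩ S).card : ℤ) = S.card * D := by
    calc ∑ v ∈ T, ((nbhd G v ∩ S).card : ℤ)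
        = ∑ v ∈ T, ∑ u ∈ S, if G.Adj v u then (1:ℤ) else 0 :=
          Finset.sum_congr rfl fun v _ => e_eq v
      _ = ∑ u ∈ S, ∑ v ∈ T, if G.Adj v u then (1:ℤ) else 0 := Finset.sum_comm
      _ = ∑ u ∈ S, D := by
          refine Finset.sum_congr rfl fun u hu => ?_
          rw [Finset.sum_boole, filt1 u hu, hd u]
      _ = S.card * D := by rw [Finset.sum_const, nsmul_eq_mul]
  have step2 : ∑ v ∈ T, ((nbhd G v ∩ S).card : ℤ)^2
      = S.card * D + S.card * (S.card - 1) * M := by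
    have expand : ∀ v ∈ T, ((nbhd G v ∩ S).card : ℤ)^2
        = ∑ u ∈ S, ∑ u' ∈ S, if G.Adj v u ∧ G.Adj v u' then (1:ℤ) else 0 := by
      intro v _
      rw [e_eq v, sq, Finset.sum_mul_sum]
      refine Finset.sum_congr rfl fun u _ => Finset.sum_congr rfl fun u' _ => ?_
      by_cases h1 : G.Adj v u <;> by_cases h2 : G.Adj v u' <;> simp [h1, h2]
    calc ∑ v ∈ T, ((nbhd G v ∩ S).card : ℤ)^2
        = ∑ v ∈ T, ∑ u ∈ S, ∑ u' ∈ S, if G.Adj v u ∧ G.Adj v u' then (1:ℤ) else 0 :=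
          Finset.sum_congr rfl expand
      _ = ∑ u ∈ S, ∑ u' ∈ S, ∑ v ∈ T, if G.Adj v u ∧ G.Adj v u' then (1:ℤ) else 0 := by
          rw [Finset.sum_comm]
          exact Finset.sum_congr rfl fun u _ => Finset.sum_comm
      _ = ∑ u ∈ S, ∑ u' ∈ S, ((nbhd G u ∩ nbhd G u' ∩ T).card : ℤ) := by
          refine Finset.sum_congr rfl fun u hu => Finset.sum_congr rfl fun u' hu' => ?_
          have hfe : T.filter (fun v => G.Adj v u ∧ G.Adj v u')
              = nbhd G u ∩ nbhd G u' ∩ T := by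
            ext v
            simp only [mem_filter, mem_inter, mem_nbhd]
            constructor
            · rintro ⟨hvT, h1, h2⟩; exact ⟨⟨h1.symm, h2.symm⟩, hvT⟩
            · rintro ⟨⟨h1, h2⟩, hvT⟩; exact ⟨hvT, h1.symm, h2.symm⟩
          rw [Finset.sum_boole, hfe]
      _ = ∑ u ∈ S, (D + (S.card - 1) * M) := by
          refine Finset.sum_congr rfl fun u hu => ?_
          rw [← Finset.add_sum_erase _ _ hu]
          have hdiag : ((nbhd G u ∩ nbhd G u ∩ T).card : ℤ) = D := by
            rw [Finset.inter_self, Finset.inter_eq_left.mpr (hsub u hu), hd u]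
          have hoff : ∀ u' ∈ S.erase u, ((nbhd G u ∩ nbhd G u' ∩ T).card : ℤ) = M := by
            intro u' hu'
            have hne : u ≠ u' := (Finset.ne_of_mem_erase hu').symm
            have hu'S : u' ∈ S := Finset.mem_of_mem_erase hu'
            have hnadj : ¬ G.Adj u u' := hS u hu u' hu'S hne
            have hsub2 : nbhd G u ∩ nbhd G u' ⊆ T :=
              fun x hx => hsub u hu (Finset.mem_of_mem_inter_left hx)
            rw [Finset.inter_eq_left.mpr hsub2]
            exact hm u u' hne hnadj
          rw [hdiag, Finset.sum_congr rfl hoff, Finset.sum_const, nsmul_eq_mul]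
          have hce : ((S.erase u).card : ℤ) = S.card - 1 := by
            rw [Finset.card_erase_of_mem hu]
            have h1S : 1 ≤ S.card := Finset.card_pos.mpr ⟨u, hu⟩
            push_cast [Nat.cast_sub h1S]
            ring
          rw [hce]
      _ = S.card * D + S.card * (S.card - 1) * M := by
          rw [Finset.sum_const, nsmul_eq_mul]; ring
  have CS := sq_sum_le_card_mul_sum_sq (s := T)
    (f := fun v => ((nbhd G v ∩ S).card : ℤ))
  rw [step1, step2] at CS
  have hcardT : (T.card : ℤ) = (Fintype.card V : ℤ) - S.card := by
    rw [hT, Finset.card_sdiff_of_subset (Finset.subset_univ S), Finset.card_univ]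
    push_cast [Nat.cast_sub (Finset.card_le_univ S)]
    ring
  rw [hcardT] at CS
  exact CS

variable {V : Type*} [Fintype V] (G : SimpleGraph V)

lemma exists_adj (hbot : G ≠ ⊥) : ∃ u w, G.Adj u w := by
  by_contra hc
  push_neg at hc
  apply hbot
  ext u w
  simp only [SimpleGraph.bot_adj, iff_false]
  exact hc u w

lemma exists_nonadj (htop : G ≠ ⊤) : ∃ u w, u ≠ w ∧ ¬ G.Adj u w := by
  by_contra hc
  push_neg at hc
  apply htop
  ext u w
  simp only [SimpleGraph.top_adj]
  exact ⟨fun ha => ha.ne, fun hne => hc u w hne⟩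

lemma nbhd_compl (v : V) : nbhd Gᶜ v = Finset.univ \ insert v (nbhd G v) := by
  ext w
  simp only [mem_nbhd, SimpleGraph.compl_adj, mem_sdiff, mem_univ, true_and, mem_insert,
    not_or]
  constructor
  · rintro ⟨h1, h2⟩; exact ⟨fun hh => h1 hh.symm, h2⟩
  · rintro ⟨h1, h2⟩; exact ⟨fun hh => h1 hh.symm, h2⟩

lemma card_nbhd_compl (d : ℕ) (hdeg : ∀ v, (nbhd G v).card = d) (v : V) :
    ((nbhd Gᶜ v).card : ℤ) = (Fintype.card V : ℤ) - 1 - d := by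
  have hvn : v ∉ nbhd G v := by simp [mem_nbhd]
  have hsub : insert v (nbhd G v) ⊆ Finset.univ := Finset.subset_univ _
  have hci : (insert v (nbhd G v)).card = d + 1 := by
    rw [Finset.card_insert_of_notMem hvn, hdeg v]
  have hle : d + 1 ≤ Fintype.card V := by
    rw [← hci, ← Finset.card_univ]; exact Finset.card_le_univ _
  rw [nbhd_compl, Finset.card_sdiff_of_subset hsub, Finset.card_univ, hci]
  omega

lemma card_common_compl (d lam : ℕ) (hdeg : ∀ v, (nbhd G v).card = d)
    (hlam : ∀ v w, G.Adj v w → (nbhd G v ∩ nbhd G w).card = lam)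
    (v w : V) (hadj : G.Adj v w) :
    ((nbhd Gᶜ v ∩ nbhd Gᶜ w).card : ℤ) = (Fintype.card V : ℤ) - 2*d + lam := by
  have hset : nbhd Gᶜ v ∩ nbhd Gᶜ w = Finset.univ \ (nbhd G v ∪ nbhd G w) := by
    ext x
    simp only [mem_inter, mem_nbhd, SimpleGraph.compl_adj, mem_sdiff, mem_univ, true_and,
      mem_union, not_or]
    constructor
    · rintro ⟨⟨-, h2⟩, ⟨-, h4⟩⟩; exact ⟨h2, h4⟩
    · rintro ⟨h1, h2⟩
      refine ⟨⟨fun hvx => ?_, h1⟩, ⟨fun hwx => ?_, h2⟩⟩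
      · exact h2 (hvx ▸ hadj.symm)
      · exact h1 (hwx ▸ hadj)
  have hcu : (nbhd G v ∪ nbhd G w).card + lam = d + d := by
    have h0 := Finset.card_union_add_card_inter (nbhd G v) (nbhd G w)
    rw [hlam v w hadj, hdeg v, hdeg w] at h0
    exact h0
  have hle : (nbhd G v ∪ nbhd G w).card ≤ Fintype.card V := by
    rw [← Finset.card_univ]; exact Finset.card_le_univ _
  rw [hset, Finset.card_sdiff_of_subset (Finset.subset_univ _), Finset.card_univ]
  omega

lemma srg_identity (d lam mu : ℕ) (hdeg : ∀ v, (nbhd G v).card = d)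
    (hlam : ∀ v w, G.Adj v w → (nbhd G v ∩ nbhd G w).card = lam)
    (hmu : ∀ v w, v ≠ w → ¬ G.Adj v w → (nbhd G v ∩ nbhd G w).card = mu)
    (v : V) :
    (d:ℤ)*((d:ℤ)-lam-1) = ((Fintype.card V : ℤ)-d-1)*mu := by
  set A := nbhd G v with hA
  set B := Finset.univ \ insert v A with hB
  have hcardB : (B.card : ℤ) = (Fintype.card V : ℤ) - d - 1 := by
    have := card_nbhd_compl G d hdeg v
    rw [nbhd_compl] at this
    rw [hB]
    linarith [this]
  -- double count
  have hswap : ∑ u ∈ A, ((nbhd G u ∩ B).card : ℤ) = ∑ w ∈ B, ((nbhd G w ∩ A).card : ℤ) := by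
    have l1 : ∀ (u : V) (X : Finset V), nbhd G u ∩ X = X.filter (fun x => G.Adj u x) := by
      intro u X; ext x; simp [mem_nbhd, and_comm, nbhd]
    calc ∑ u ∈ A, ((nbhd G u ∩ B).card : ℤ)
        = ∑ u ∈ A, ∑ w ∈ B, if G.Adj u w then (1:ℤ) else 0 := by
          refine Finset.sum_congr rfl fun u _ => ?_
          rw [l1, Finset.sum_boole]
      _ = ∑ w ∈ B, ∑ u ∈ A, if G.Adj u w then (1:ℤ) else 0 := Finset.sum_comm
      _ = ∑ w ∈ B, ((nbhd G w ∩ A).card : ℤ) := by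
          refine Finset.sum_congr rfl fun w _ => ?_
          rw [l1, Finset.sum_boole]
          norm_cast
          congr 1
          apply Finset.filter_congr
          intro x _
          exact ⟨fun hh => hh.symm, fun hh => hh.symm⟩
  -- LHS values
  have hL : ∀ u ∈ A, ((nbhd G u ∩ B).card : ℤ) = (d:ℤ) - lam - 1 := by
    intro u hu
    have hadj : G.Adj v u := (mem_nbhd G v u).mp hu
    have hvu : v ∈ nbhd G u := (mem_nbhd G u v).mpr hadj.symm
    have hsplit := Finset.card_inter_add_card_sdiff (nbhd G u) (insert v A)
    have hIB : nbhd G u ∩ B = nbhd G u \ insert v A := by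
      rw [hB]
      ext x
      simp only [mem_inter, mem_sdiff, mem_univ, true_and]
    have hIns : nbhd G u ∩ insert v A = insert v (nbhd G u ∩ A) := by
      ext x
      simp only [mem_inter, mem_insert]
      constructor
      · rintro ⟨h1, h2 | h3⟩
        · left; exact h2
        · right; exact ⟨h1, h3⟩
      · rintro (rfl | ⟨h1, h2⟩)
        · exact ⟨hvu, Or.inl rfl⟩
        · exact ⟨h1, Or.inr h2⟩
    have hvA : v ∉ nbhd G u ∩ A := by
      rw [hA]
      simp [mem_nbhd, G.irrefl]
    have hlam' : (nbhd G u ∩ A).card = lam := by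
      rw [hA, Finset.inter_comm]
      exact hlam v u hadj
    rw [hIB]
    rw [hIns] at hsplit
    rw [Finset.card_insert_of_notMem hvA, hlam', hdeg u] at hsplit
    have hlamd : lam + 1 ≤ d := by omega
    omega
  have hR : ∀ w ∈ B, ((nbhd G w ∩ A).card : ℤ) = mu := by
    intro w hw
    rw [hB] at hw
    simp only [mem_sdiff, mem_univ, true_and, mem_insert, not_or] at hw
    obtain ⟨hwv, hwA⟩ := hw
    have hnadj : ¬ G.Adj v w := by rwa [hA, mem_nbhd] at hwA
    have : (nbhd G v ∩ nbhd G w).card = mu := hmu v w (fun hh => hwv hh.symm) hnadj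
    rw [hA, Finset.inter_comm]
    exact_mod_cast this
  rw [Finset.sum_congr rfl hL, Finset.sum_congr rfl hR, Finset.sum_const, Finset.sum_const,
    nsmul_eq_mul, nsmul_eq_mul] at hswap
  rw [hA] at hswap
  rw [hdeg v] at hswap
  rw [hcardB] at hswap
  exact_mod_cast hswap


lemma nonneg_of_mul_one_le (a X : ℝ) (h1 : 1 ≤ a) (h2 : 0 ≤ a * X) : 0 ≤ X := by
  by_contra hc
  push_neg at hc
  nlinarith

lemma indepNum_bddAbove : ∀ k ∈ { n : ℕ | ∃ s : Finset V,
    (∀ i ∈ s, ∀ j ∈ s, i ≠ j → ¬ G.Adj i j) ∧ s.card = n }, k ≤ Fintype.card V := by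
  rintro k ⟨s, -, rfl⟩
  exact Finset.card_le_univ s

lemma coloring_bound (k : ℕ) (hk : G.Colorable k) :
    Fintype.card V ≤ k * indepNum G := by
  obtain ⟨C⟩ := hk
  have hcard := Finset.card_eq_sum_card_fiberwise
    (f := fun v => C v) (s := Finset.univ) (t := Finset.univ) (fun x _ => Finset.mem_univ _)
  have hb : ∀ b : Fin k, (Finset.univ.filter fun x => C x = b).card ≤ indepNum G := by
    intro b
    apply le_csSup ⟨Fintype.card V, indepNum_bddAbove G⟩
    refine ⟨Finset.univ.filter fun x => C x = b, fun i hi j hj hne hadj => ?_, rfl⟩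
    simp only [Finset.mem_filter] at hi hj
    exact C.valid hadj (hi.2.trans hj.2.symm)
  calc Fintype.card V = ∑ b : Fin k, (Finset.univ.filter fun x => C x = b).card := by
        rw [← hcard, Finset.card_univ]
      _ ≤ ∑ _b : Fin k, indepNum G := Finset.sum_le_sum fun b _ => hb b
      _ = k * indepNum G := by
        rw [Finset.sum_const, Finset.card_univ, Fintype.card_fin, smul_eq_mul]

end Aux

set_option maxHeartbeats 1600000 in
theorem stmt12 {V : Type*} [Fintype V] (G : SimpleGraph V) (n d lam mu : ℕ)
    (h : IsSRG G n d lam mu) (t : ℝ)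
    (ht : t = Real.sqrt (((mu : ℝ) - (lam : ℝ)) ^ 2 + 4 * ((d : ℝ) - (mu : ℝ)))) :
    (indepNum G : ℤ) ≤
      ⌊(n : ℝ) * (t + (mu : ℝ) - (lam : ℝ)) /
        (2 * (d : ℝ) + t + (mu : ℝ) - (lam : ℝ))⌋ ∧
    (cliqueNum G : ℤ) ≤ 1 + ⌊2 * (d : ℝ) / (t + (mu : ℝ) - (lam : ℝ))⌋ ∧
    ((1 + ⌈2 * (d : ℝ) / (t + (mu : ℝ) - (lam : ℝ))⌉₊ : ℕ) : ℕ∞) ≤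
      G.chromaticNumber ∧
    ((⌈(n : ℝ) * (t + (mu : ℝ) - (lam : ℝ)) /
        (2 * (d : ℝ) + t + (mu : ℝ) - (lam : ℝ))⌉₊ : ℕ) : ℕ∞) ≤
      Gᶜ.chromaticNumber := by
  classical
  obtain ⟨hn, hdeg, hlam, hmu, htop, hbot⟩ := h
  obtain ⟨u0, w0, hadj0⟩ := exists_adj G hbot
  obtain ⟨u1, w1, hne1, hnadj1⟩ := exists_nonadj G htop
  haveI : Nonempty V := ⟨u0⟩
  -- basic numeric facts
  have hd1 : 1 ≤ d := by
    have hmem : w0 ∈ nbhd G u0 := (mem_nbhd G u0 w0).mpr hadj0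
    have hp := Finset.card_pos.mpr ⟨w0, hmem⟩
    rw [hdeg u0] at hp
    omega
  have hld : lam + 1 ≤ d := by
    have hsub : nbhd G u0 ∩ nbhd G w0 ⊆ (nbhd G u0).erase w0 := by
      intro x hx
      obtain ⟨h1, h2⟩ := Finset.mem_inter.mp hx
      exact Finset.mem_erase.mpr ⟨fun hh => (G.irrefl (hh ▸ (mem_nbhd G w0 x).mp h2)), h1⟩
    have hcle := Finset.card_le_card hsub
    rw [Finset.card_erase_of_mem ((mem_nbhd G u0 w0).mpr hadj0), hlam u0 w0 hadj0,
      hdeg u0] at hcle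
    omega
  have hmd : mu ≤ d := by
    have hsub : nbhd G u1 ∩ nbhd G w1 ⊆ nbhd G u1 := Finset.inter_subset_left
    have hcle := Finset.card_le_card hsub
    rw [hmu u1 w1 hne1 hnadj1, hdeg u1] at hcle
    exact hcle
  have hdn : d + 2 ≤ n := by
    have hw1 : w1 ∉ nbhd G u1 := fun hh => hnadj1 ((mem_nbhd G u1 w1).mp hh)
    have hu1 : u1 ∉ insert w1 (nbhd G u1) := by
      simp only [Finset.mem_insert]
      push_neg
      exact ⟨hne1, fun hh => G.irrefl ((mem_nbhd G u1 u1).mp hh)⟩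
    have hc2 : (insert u1 (insert w1 (nbhd G u1))).card = d + 2 := by
      rw [Finset.card_insert_of_notMem hu1, Finset.card_insert_of_notMem hw1, hdeg u1]
    have := Finset.card_le_univ (insert u1 (insert w1 (nbhd G u1)))
    rw [hc2, hn] at this
    exact this
  have hid : (d:ℤ)*((d:ℤ)-lam-1) = ((n:ℤ)-d-1)*mu := by
    have := srg_identity G d lam mu hdeg hlam hmu u0
    rwa [hn] at this
  have hn2dl : (0:ℤ) ≤ (n:ℤ) - 2*d + lam := by
    have := card_common_compl G d lam hdeg hlam u0 w0 hadj0
    rw [hn] at this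
    rw [← this]
    positivity
  -- real versions
  have hd1R : (1:ℝ) ≤ d := by exact_mod_cast hd1
  have hmdR : (mu:ℝ) ≤ d := by exact_mod_cast hmd
  have hdnR : (d:ℝ) + 2 ≤ n := by exact_mod_cast hdn
  have hldR : (lam:ℝ) + 1 ≤ d := by exact_mod_cast hld
  have hidR : (d:ℝ)*((d:ℝ)-lam-1) = ((n:ℝ)-d-1)*mu := by exact_mod_cast hid
  have hn2dlR : (0:ℝ) ≤ (n:ℝ) - 2*d + lam := by exact_mod_cast hn2dl
  have ht0 : 0 ≤ t := ht ▸ Real.sqrt_nonneg _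
  have ht2 : t^2 = ((mu:ℝ)-lam)^2 + 4*((d:ℝ)-mu) := by
    rw [ht, Real.sq_sqrt]
    nlinarith [sq_nonneg ((mu:ℝ)-lam)]
  have hs : 0 < t + (mu:ℝ) - lam := spos n d lam mu t hd1R hmdR hdnR hidR ht0 ht2
  have hden : (0:ℝ) < 2*(d:ℝ) + t + mu - lam := by linarith
  -- bound for independent sets of G
  have hIndepBound : ∀ S : Finset V, (∀ i ∈ S, ∀ j ∈ S, i ≠ j → ¬ G.Adj i j) →
      1 ≤ S.card → (S.card:ℝ)*(2*(d:ℝ) + t + mu - lam) ≤ (n:ℝ)*(t + (mu:ℝ) - lam) := by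
    intro S hind hS1
    have hz := lemA G d mu (fun v => by rw [hdeg v])
      (fun v w h1 h2 => by rw [hmu v w h1 h2]) S hind
    rw [hn] at hz
    have hzR : ((S.card:ℝ)*d)^2 ≤
        ((n:ℝ)-S.card)*(S.card*d + S.card*((S.card:ℝ)-1)*mu) := by exact_mod_cast hz
    have ha1 : (1:ℝ) ≤ S.card := by exact_mod_cast hS1
    have hfac : 0 ≤ (S.card:ℝ) *
        (((n:ℝ)-S.card)*((d:ℝ)+((S.card:ℝ)-1)*mu) - S.card*(d:ℝ)^2) := by nlinarith [hzR]
    have hQ : (S.card:ℝ)*(d:ℝ)^2 ≤ ((n:ℝ)-S.card)*((d:ℝ)+((S.card:ℝ)-1)*mu) := by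
      have := nonneg_of_mul_one_le _ _ ha1 hfac
      linarith
    have := alg1 n d lam mu t S.card hd1R (by positivity) hmdR hdnR hidR ht0 ht2 ha1 hQ hs
    linarith [this]
  -- bound for independent sets of Gᶜ (cliques of G)
  have hCliqueBound : ∀ S : Finset V, (∀ i ∈ S, ∀ j ∈ S, i ≠ j → ¬ Gᶜ.Adj i j) →
      1 ≤ S.card → (S.card:ℝ)*(t + (mu:ℝ) - lam) ≤ (t + (mu:ℝ) - lam) + 2*(d:ℝ) := by
    intro S hind hS1
    have hz := lemA Gᶜ ((n:ℤ)-1-d) ((n:ℤ)-2*d+lam)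
      (fun v => by rw [card_nbhd_compl G d hdeg v, hn])
      (fun v w hne hnadj => by
        have hadj : G.Adj v w := by
          by_contra hc
          exact hnadj ((SimpleGraph.compl_adj _ _ _).mpr ⟨hne, hc⟩)
        rw [card_common_compl G d lam hdeg hlam v w hadj, hn]) S hind
    rw [hn] at hz
    have hzR : ((S.card:ℝ)*((n:ℝ)-1-d))^2 ≤ ((n:ℝ)-S.card)*(S.card*((n:ℝ)-1-d)
        + S.card*((S.card:ℝ)-1)*((n:ℝ)-2*d+lam)) := by exact_mod_cast hz
    have ha1 : (1:ℝ) ≤ S.card := by exact_mod_cast hS1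
    have hfac : 0 ≤ (S.card:ℝ) * (((n:ℝ)-S.card)*(((n:ℝ)-1-d)+((S.card:ℝ)-1)*((n:ℝ)-2*d+lam))
        - S.card*((n:ℝ)-1-d)^2) := by nlinarith [hzR]
    have hQ : (S.card:ℝ)*((n:ℝ)-1-d)^2 ≤
        ((n:ℝ)-S.card)*(((n:ℝ)-1-d)+((S.card:ℝ)-1)*((n:ℝ)-2*d+lam)) := by
      have := nonneg_of_mul_one_le _ _ ha1 hfac
      linarith
    exact alg2 n d lam mu t S.card hd1R hmdR hdnR hldR hn2dlR hidR ht2 ha1 hQ hs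
  -- independence number of G
  have hαmem := Nat.sSup_mem (s := { k : ℕ | ∃ s : Finset V,
      (∀ i ∈ s, ∀ j ∈ s, i ≠ j → ¬ G.Adj i j) ∧ s.card = k })
    ⟨0, ⟨∅, by simp, by simp⟩⟩ ⟨Fintype.card V, indepNum_bddAbove G⟩
  obtain ⟨Sα, hSαind, hSαcard⟩ := hαmem
  have hSαEq : Sα.card = indepNum G := hSαcard
  have hα1 : 1 ≤ indepNum G := by
    apply le_csSup ⟨Fintype.card V, indepNum_bddAbove G⟩
    refine ⟨{u0}, fun i hi j hj hne _ => ?_, Finset.card_singleton u0⟩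
    rw [Finset.mem_singleton] at hi hj
    exact hne (hi.trans hj.symm)
  have hαR : (indepNum G:ℝ)*(2*(d:ℝ) + t + mu - lam) ≤ (n:ℝ)*(t + (mu:ℝ) - lam) := by
    rw [← hSαEq]
    exact hIndepBound Sα hSαind (by rw [hSαEq]; exact hα1)
  -- independence number of Gᶜ
  have hαcmem := Nat.sSup_mem (s := { k : ℕ | ∃ s : Finset V,
      (∀ i ∈ s, ∀ j ∈ s, i ≠ j → ¬ Gᶜ.Adj i j) ∧ s.card = k })
    ⟨0, ⟨∅, by simp, by simp⟩⟩ ⟨Fintype.card V, indepNum_bddAbove Gᶜ⟩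
  obtain ⟨Sc, hScind, hSccard⟩ := hαcmem
  have hScEq : Sc.card = indepNum Gᶜ := hSccard
  have hαc1 : 1 ≤ indepNum Gᶜ := by
    apply le_csSup ⟨Fintype.card V, indepNum_bddAbove Gᶜ⟩
    refine ⟨{u0}, fun i hi j hj hne _ => ?_, Finset.card_singleton u0⟩
    rw [Finset.mem_singleton] at hi hj
    exact hne (hi.trans hj.symm)
  have hαcR : (indepNum Gᶜ:ℝ)*(t + (mu:ℝ) - lam) ≤ (t + (mu:ℝ) - lam) + 2*(d:ℝ) := by
    rw [← hScEq]
    exact hCliqueBound Sc hScind (by rw [hScEq]; exact hαc1)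
  refine ⟨?_, ?_, ?_, ?_⟩
  -- 1 : independence number
  · apply Int.le_floor.mpr
    push_cast
    rw [le_div_iff₀ hden]
    linarith [hαR]
  -- 2 : clique number
  · have hclmem := Nat.sSup_mem (s := { k : ℕ | ∃ s : Finset V,
        (∀ i ∈ s, ∀ j ∈ s, i ≠ j → G.Adj i j) ∧ s.card = k })
      ⟨0, ⟨∅, by simp, by simp⟩⟩
      ⟨Fintype.card V, by rintro k ⟨s, -, rfl⟩; exact Finset.card_le_univ s⟩
    obtain ⟨Scl, hSclq, hSclcard⟩ := hclmem
    have hSclEq : Scl.card = cliqueNum G := hSclcard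
    have hcl1 : 1 ≤ cliqueNum G := by
      apply le_csSup ⟨Fintype.card V, by rintro k ⟨s, -, rfl⟩; exact Finset.card_le_univ s⟩
      refine ⟨{u0}, fun i hi j hj hne => ?_, Finset.card_singleton u0⟩
      rw [Finset.mem_singleton] at hi hj
      exact absurd (hi.trans hj.symm) hne
    have hclR : (cliqueNum G:ℝ)*(t + (mu:ℝ) - lam) ≤ (t + (mu:ℝ) - lam) + 2*(d:ℝ) := by
      rw [← hSclEq]
      apply hCliqueBound Scl _ (by rw [hSclEq]; exact hcl1)
      intro i hi j hj hne hadjc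
      exact ((SimpleGraph.compl_adj _ _ _).mp hadjc).2 (hSclq i hi j hj hne)
    have hfl : ((cliqueNum G:ℤ) - 1) ≤ ⌊2*(d:ℝ)/(t + (mu:ℝ) - lam)⌋ := by
      apply Int.le_floor.mpr
      push_cast
      rw [le_div_iff₀ hs]
      have hexp : ((cliqueNum G:ℝ)-1)*(t + (mu:ℝ) - lam)
          = (cliqueNum G:ℝ)*(t + (mu:ℝ) - lam) - (t + (mu:ℝ) - lam) := by ring
      rw [hexp]
      linarith [hclR]
    linarith [hfl]
  -- 3 : chromatic number of G
  · rw [SimpleGraph.chromaticNumber]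
    refine le_iInf₂ fun k hk => ?_
    have hcol : n ≤ k * indepNum G := by
      have := coloring_bound G k hk
      rwa [hn] at this
    have hcolR : (n:ℝ) ≤ (k:ℝ) * indepNum G := by exact_mod_cast hcol
    have hαpos : (0:ℝ) < indepNum G := by
      have : (1:ℝ) ≤ indepNum G := by exact_mod_cast hα1
      linarith
    have hks : 2*(d:ℝ) + (t + (mu:ℝ) - lam) ≤ (k:ℝ)*(t + (mu:ℝ) - lam) := by
      have h1 : (2*(d:ℝ) + (t + (mu:ℝ) - lam))*(indepNum G:ℝ)
          ≤ ((k:ℝ)*(t + (mu:ℝ) - lam))*(indepNum G:ℝ) := by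
        nlinarith [mul_le_mul_of_nonneg_right hcolR (le_of_lt hs), hαR]
      exact le_of_mul_le_mul_right h1 hαpos
    have hk1 : 1 ≤ k := by
      rcases Nat.eq_zero_or_pos k with rfl | hpos
      · exfalso
        push_cast at hks
        linarith
      · exact hpos
    have hkk : 1 + ⌈2*(d:ℝ)/(t + (mu:ℝ) - lam)⌉₊ ≤ k := by
      have hceil : ⌈2*(d:ℝ)/(t + (mu:ℝ) - lam)⌉₊ ≤ k - 1 := by
        apply Nat.ceil_le.mpr
        rw [div_le_iff₀ hs]
        have : ((k - 1 : ℕ):ℝ) = (k:ℝ) - 1 := by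
          push_cast [Nat.cast_sub hk1]
          ring
        rw [this]
        nlinarith [hks]
      omega
    exact_mod_cast Nat.cast_le.mpr hkk
  -- 4 : chromatic number of Gᶜ
  · rw [SimpleGraph.chromaticNumber]
    refine le_iInf₂ fun k hk => ?_
    have hcol : n ≤ k * indepNum Gᶜ := by
      have := coloring_bound Gᶜ k hk
      rwa [hn] at this
    have hcolR : (n:ℝ) ≤ (k:ℝ) * indepNum Gᶜ := by exact_mod_cast hcol
    have hkn : (n:ℝ)*(t + (mu:ℝ) - lam) ≤ (k:ℝ)*(2*(d:ℝ) + t + mu - lam) := by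
      have hk0 : (0:ℝ) ≤ k := Nat.cast_nonneg k
      nlinarith [mul_le_mul_of_nonneg_right hcolR (le_of_lt hs),
        mul_le_mul_of_nonneg_left hαcR hk0]
    have hkk : ⌈(n:ℝ)*(t + (mu:ℝ) - lam) / (2*(d:ℝ) + t + mu - lam)⌉₊ ≤ k := by
      apply Nat.ceil_le.mpr
      rw [div_le_iff₀ hden]
      linarith [hkn]
    exact_mod_cast Nat.cast_le.mpr hkk
end

section
/- Let G be a finite simple graph on n vertices with at least one edge that is both vertex-transitive and edge-transitive, and let Ḡ be its complement. Then θ'(Ḡ) = θ(Ḡ) = 1 − λ₁(G)/λ_n(G). -/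
open scoped Classical

noncomputable def schrijverTheta {V : Type*} [Fintype V] (G : SimpleGraph V) : ℝ :=
  sSup { x : ℝ | ∃ B : Matrix V V ℝ, B.PosSemidef ∧ B.trace = 1 ∧
    (∀ i j, G.Adj i j → B i j = 0) ∧ (∀ i j, 0 ≤ B i j) ∧ x = ∑ i, ∑ j, B i j }

def VertexTransitive {V : Type*} (G : SimpleGraph V) : Prop :=
  ∀ u v : V, ∃ φ : G ≃g G, φ u = v

def EdgeTransitive {V : Type*} (G : SimpleGraph V) : Prop :=
  ∀ e₁ ∈ G.edgeSet, ∀ e₂ ∈ G.edgeSet, ∃ φ : G ≃g G, Sym2.map φ e₁ = e₂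

noncomputable def adjM {V : Type*} [Fintype V] (G : SimpleGraph V) : Matrix V V ℝ :=
  Matrix.of fun i j => if G.Adj i j then (1 : ℝ) else 0

noncomputable def degM {V : Type*} [Fintype V] (G : SimpleGraph V) : Matrix V V ℝ :=
  Matrix.diagonal fun v => ((nbhd G v).card : ℝ)

noncomputable def lapM {V : Type*} [Fintype V] (G : SimpleGraph V) : Matrix V V ℝ :=
  degM G - adjM G

noncomputable def signlessLapM {V : Type*} [Fintype V] (G : SimpleGraph V) : Matrix V V ℝ :=
  degM G + adjM G

noncomputable def normLapM {V : Type*} [Fintype V] (G : SimpleGraph V) : Matrix V V ℝ :=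
  1 - (Matrix.diagonal fun v => 1 / Real.sqrt ((nbhd G v).card)) * adjM G *
      (Matrix.diagonal fun v => 1 / Real.sqrt ((nbhd G v).card))

/-- The `k`-th largest eigenvalue (1-indexed, counted with multiplicity) of the
adjacency matrix of `G`, obtained from the multiset of real roots of its
characteristic polynomial sorted in nonincreasing order. -/
noncomputable def adjEig {V : Type*} [Fintype V] [DecidableEq V]
    (G : SimpleGraph V) (k : ℕ) : ℝ :=
  ((((adjM G).charpoly.roots).sort (· ≤ ·)).reverse).getD (k - 1) 0

/-!
A vertex-transitive graph is `d`-regular, so `λ₁ = d`, and as `tr A = 0` the least eigenvalue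
`μ = λ_n` is negative. The matrix `B₀ = (I - A/μ)/n` is entrywise nonnegative, positive
semidefinite (its eigenvalues are `(1 - λ/μ)/n ≥ 0`), has trace one, vanishes on the edges of `Ḡ`,
and its entries sum to `1 - d/μ`: this is the lower bound, already for `θ'(Ḡ)`.
Conversely, averaging a feasible matrix `B` for `θ(Ḡ)` over `Aut G` keeps it feasible with the
same entry sum, and by vertex and edge transitivity the average is `I/n + c A`. Positive
semidefiniteness on a `μ`-eigenvector gives `1/n + c μ ≥ 0`, so the entry sum `1 + c n d` is at
most `1 - d/μ`.
-/

namespace Matrix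

section Spectrum

variable {n : Type*} [Fintype n] [DecidableEq n]

theorem mem_spectrum_iff_exists_mulVec_eq_smul {K : Type*} [Field K] {A : Matrix n n K} {t : K} :
    t ∈ spectrum K A ↔ ∃ w ≠ 0, A *ᵥ w = t • w := by
  rw [← spectrum_toLin', ← Module.End.hasEigenvalue_iff_mem_spectrum,
    Module.End.hasEigenvalue_iff]
  simp [Submodule.ne_bot_iff, and_comm]

theorem PosSemidef.nonneg_of_mem_spectrum {A : Matrix n n ℝ} (hA : A.PosSemidef) {t : ℝ}
    (ht : t ∈ spectrum ℝ A) : 0 ≤ t :=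
  (posSemidef_iff_isHermitian_and_spectrum_nonneg.mp hA).2 ht

theorem IsHermitian.posSemidef_sub_smul_one {A : Matrix n n ℝ} (hA : A.IsHermitian) {μ : ℝ}
    (hμ : ∀ x ∈ spectrum ℝ A, μ ≤ x) : (A - μ • 1).PosSemidef := by
  refine posSemidef_iff_isHermitian_and_spectrum_nonneg.mpr
    ⟨hA.sub (isHermitian_one.smul (IsSelfAdjoint.all μ)), fun x hx => ?_⟩
  rw [← Algebra.algebraMap_eq_smul_one, ← spectrum.sub_singleton_eq] at hx
  obtain ⟨y, hy, _, rfl, rfl⟩ := hx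
  exact sub_nonneg.mpr (hμ y hy)

theorem IsHermitian.reverse_sort_roots_charpoly {A : Matrix n n ℝ} (hA : A.IsHermitian) :
    (A.charpoly.roots.sort (· ≤ ·)).reverse = List.ofFn hA.eigenvalues₀ := by
  rw [← hA.sort_roots_charpoly_eq_eigenvalues₀,
    show A.charpoly.roots.map RCLike.re = A.charpoly.roots by simp]
  apply List.Perm.eq_of_sortedGE
  · exact List.sortedGE_reverse.mpr (List.sortedLE_iff_pairwise.mpr (Multiset.pairwise_sort _ _))
  · exact List.sortedGE_iff_pairwise.mpr (Multiset.pairwise_sort _ _)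
  · rw [← Multiset.coe_eq_coe, Multiset.coe_reverse, Multiset.sort_eq, Multiset.sort_eq]

theorem IsHermitian.range_eigenvalues₀ {A : Matrix n n ℝ} (hA : A.IsHermitian) :
    Set.range hA.eigenvalues₀ = spectrum ℝ A := by
  rw [hA.spectrum_real_eq_range_eigenvalues]
  exact (EquivLike.range_comp _ _).symm

theorem IsHermitian.isGreatest_spectrum {A : Matrix n n ℝ} (hA : A.IsHermitian)
    (h : 0 < Fintype.card n) : IsGreatest (spectrum ℝ A) (hA.eigenvalues₀ ⟨0, h⟩) := by
  rw [← hA.range_eigenvalues₀]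
  exact ⟨Set.mem_range_self _, Set.forall_mem_range.mpr fun i =>
    hA.eigenvalues₀_antitone (Fin.le_iff_val_le_val.mpr (Nat.zero_le _))⟩

theorem IsHermitian.isLeast_spectrum {A : Matrix n n ℝ} (hA : A.IsHermitian)
    (h : 0 < Fintype.card n) :
    IsLeast (spectrum ℝ A) (hA.eigenvalues₀ ⟨Fintype.card n - 1, Nat.sub_one_lt_of_lt h⟩) := by
  rw [← hA.range_eigenvalues₀]
  exact ⟨Set.mem_range_self _, Set.forall_mem_range.mpr fun i =>
    hA.eigenvalues₀_antitone (Fin.le_iff_val_le_val.mpr (Nat.le_sub_one_of_lt i.2))⟩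

theorem IsHermitian.exists_neg_mem_spectrum {A : Matrix n n ℝ} (hA : A.IsHermitian)
    (htr : A.trace = 0) {x : ℝ} (hx : x ∈ spectrum ℝ A) (hpos : 0 < x) :
    ∃ y ∈ spectrum ℝ A, y < 0 := by
  rw [hA.spectrum_real_eq_range_eigenvalues] at hx ⊢
  obtain ⟨i, rfl⟩ := hx
  by_contra! hnonneg
  have hsum := Finset.sum_pos' (fun j _ => hnonneg _ (Set.mem_range_self j))
    ⟨i, Finset.mem_univ _, hpos⟩
  have htr' := hA.trace_eq_sum_eigenvalues
  simp only [RCLike.ofReal_real_eq_id, id, htr] at htr'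
  linarith

end Spectrum

section GroupAverage

variable (Γ : Type*) {n : Type*} [Group Γ] [Fintype Γ] [MulAction Γ n]

noncomputable def groupAverage (B : Matrix n n ℝ) : Matrix n n ℝ :=
  (Fintype.card Γ : ℝ)⁻¹ • ∑ g : Γ, B.submatrix (g • ·) (g • ·)

variable {Γ} (B : Matrix n n ℝ)

theorem groupAverage_apply (i j : n) :
    groupAverage Γ B i j = (Fintype.card Γ : ℝ)⁻¹ * ∑ g : Γ, B (g • i) (g • j) := by
  simp [groupAverage, sum_apply]

theorem groupAverage_smul_apply (h : Γ) (i j : n) :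
    groupAverage Γ B (h • i) (h • j) = groupAverage Γ B i j := by
  simp only [groupAverage_apply, smul_smul]
  congr 1
  exact Fintype.sum_equiv (Equiv.mulRight h) _ _ fun _ => rfl

theorem PosSemidef.groupAverage {B : Matrix n n ℝ} (hB : B.PosSemidef) :
    (groupAverage Γ B).PosSemidef :=
  (posSemidef_sum _ fun g _ => hB.submatrix _).smul (by positivity)

variable [Fintype n]

theorem trace_groupAverage : (groupAverage Γ B).trace = B.trace := by
  have h : ∀ g : Γ, (B.submatrix (g • ·) (g • ·)).trace = B.trace := fun g =>
    Equiv.sum_comp (MulAction.toPerm g) fun i => B i i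
  simp [groupAverage, trace_sum, h]

theorem sum_groupAverage : ∑ i, ∑ j, groupAverage Γ B i j = ∑ i, ∑ j, B i j := by
  have h : ∀ g : Γ, ∑ i, ∑ j, B (g • i) (g • j) = ∑ i, ∑ j, B i j := fun g =>
    calc ∑ i, ∑ j, B (g • i) (g • j) = ∑ i, ∑ j, B (g • i) j :=
          Finset.sum_congr rfl fun i _ => Equiv.sum_comp (MulAction.toPerm g) (B (g • i))
      _ = ∑ i, ∑ j, B i j := Equiv.sum_comp (MulAction.toPerm g) fun i => ∑ j, B i j
  calc ∑ i, ∑ j, groupAverage Γ B i j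
      = (Fintype.card Γ : ℝ)⁻¹ * ∑ g : Γ, ∑ i, ∑ j, B (g • i) (g • j) := by
        simp_rw [groupAverage_apply, ← Finset.mul_sum]
        exact congrArg _ ((Finset.sum_congr rfl fun i _ => Finset.sum_comm).trans Finset.sum_comm)
    _ = ∑ i, ∑ j, B i j := by simp [h]

end GroupAverage

end Matrix

instance SimpleGraph.Iso.finite {V W : Type*} [Finite V] [Finite W] {G : SimpleGraph V}
    {G' : SimpleGraph W} : Finite (G ≃g G') :=
  Finite.of_injective _ DFunLike.coe_injective

theorem SimpleGraph.IsRegularOfDegree.isGreatest_spectrum_adjMatrix {V : Type*} [Fintype V]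
    [DecidableEq V] [Nonempty V] {G : SimpleGraph V} {d : ℕ} (hd : G.IsRegularOfDegree d) :
    IsGreatest (spectrum ℝ (G.adjMatrix ℝ)) d := by
  refine ⟨Matrix.mem_spectrum_iff_exists_mulVec_eq_smul.mpr ⟨fun _ => 1, ?_, ?_⟩, fun x hx => ?_⟩
  · exact Function.ne_iff.mpr ⟨Classical.arbitrary V, one_ne_zero⟩
  · ext v
    simpa using adjMatrix_mulVec_const_apply_of_regular hd (a := (1 : ℝ)) (v := v)
  · rw [← Matrix.spectrum_toLin', ← Module.End.hasEigenvalue_iff_mem_spectrum] at hx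
    obtain ⟨k, hk⟩ := eigenvalue_mem_ball hx
    have hrow : ∑ j ∈ Finset.univ.erase k, ‖G.adjMatrix ℝ k j‖ = d := by
      rw [Finset.sum_erase _ (by simp), ← hd k, ← SimpleGraph.card_neighborFinset_eq_degree,
        SimpleGraph.neighborFinset_eq_filter]
      simp [SimpleGraph.adjMatrix_apply, apply_ite]
    rw [Metric.mem_closedBall, hrow, Real.dist_eq] at hk
    simpa using (le_abs_self _).trans hk

theorem VertexTransitive.isRegularOfDegree {V : Type*} [Fintype V] {G : SimpleGraph V}
    (hvt : VertexTransitive G) (u : V) : G.IsRegularOfDegree (G.degree u) := fun v => by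
  obtain ⟨φ, rfl⟩ := hvt u v
  exact φ.degree_eq u

section AdjacencySpectrum

variable {V : Type*} [Fintype V] (G : SimpleGraph V)

theorem adjM_eq_adjMatrix : adjM G = G.adjMatrix ℝ := rfl

theorem isHermitian_adjM : (adjM G).IsHermitian :=
  Matrix.isHermitian_iff_isSymm.mpr G.isSymm_adjMatrix

variable [DecidableEq V]

theorem adjEig_succ {k : ℕ} (hk : k < Fintype.card V) :
    adjEig G (k + 1) = (isHermitian_adjM G).eigenvalues₀ ⟨k, hk⟩ := by
  rw [adjEig, (isHermitian_adjM G).reverse_sort_roots_charpoly]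
  simp [hk]

theorem isGreatest_spectrum_adjEig_one [Nonempty V] :
    IsGreatest (spectrum ℝ (adjM G)) (adjEig G 1) := by
  rw [adjEig_succ G (k := 0) Fintype.card_pos]
  exact (isHermitian_adjM G).isGreatest_spectrum _

theorem isLeast_spectrum_adjEig_card [Nonempty V] :
    IsLeast (spectrum ℝ (adjM G)) (adjEig G (Fintype.card V)) := by
  have h := adjEig_succ G (Nat.sub_one_lt_of_lt (Fintype.card_pos (α := V)))
  rw [Nat.sub_add_cancel Fintype.card_pos] at h
  rw [h]
  exact (isHermitian_adjM G).isLeast_spectrum Fintype.card_pos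

end AdjacencySpectrum

section Theta

open Matrix

variable {V : Type*} [Fintype V] [DecidableEq V] {G : SimpleGraph V}

theorem eq_smul_one_add_smul_adjM_of_invariant (hvt : VertexTransitive G)
    (het : EdgeTransitive G) {B : Matrix V V ℝ} (hB : B.IsSymm)
    (hinv : ∀ (φ : G ≃g G) i j, B (φ i) (φ j) = B i j)
    (hzero : ∀ i j, Gᶜ.Adj i j → B i j = 0) {u v : V} (huv : G.Adj u v) :
    B = B u u • 1 + B u v • adjM G := by
  ext i j
  rcases eq_or_ne i j with rfl | hij
  · obtain ⟨φ, rfl⟩ := hvt u i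
    simp [hinv, adjM]
  by_cases hadj : G.Adj i j
  · obtain ⟨φ, hφ⟩ := het s(u, v) huv s(i, j) hadj
    have hedge : B i j = B u v := by
      rw [Sym2.map_mk, Sym2.eq_iff] at hφ
      rcases hφ with ⟨rfl, rfl⟩ | ⟨rfl, rfl⟩
      · exact hinv φ u v
      · rw [hB.apply, hinv]
    simp [adjM, hij, hadj, hedge]
  · simp [adjM, hij, hadj, hzero i j ((G.compl_adj i j).mpr ⟨hij, hadj⟩)]

theorem trace_smul_one_add_smul_adjM (a c : ℝ) :
    (a • 1 + c • adjM G).trace = Fintype.card V * a := by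
  simp [trace_add, adjM_eq_adjMatrix, mul_comm]

theorem sum_smul_one_add_smul_adjM {d : ℕ} (hd : G.IsRegularOfDegree d) (a c : ℝ) :
    ∑ i, ∑ j, (a • 1 + c • adjM G) i j = Fintype.card V * (a + c * d) := by
  have hrow : ∀ i, ∑ j, adjM G i j = d := fun i => by
    have h := SimpleGraph.adjMatrix_mulVec_const_apply_of_regular hd (a := (1 : ℝ)) (v := i)
    simpa only [adjM_eq_adjMatrix, mulVec, dotProduct, Function.const_apply, mul_one] using h
  simp [Finset.sum_add_distrib, ← Finset.mul_sum, hrow, one_apply, mul_add]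

theorem sum_le_one_sub_degree_div (hvt : VertexTransitive G) (het : EdgeTransitive G) {u v : V}
    (huv : G.Adj u v) {μ : ℝ} (hμ : μ ∈ spectrum ℝ (adjM G)) (hμneg : μ < 0)
    {B : Matrix V V ℝ} (hB : B.PosSemidef) (htr : B.trace = 1)
    (hzero : ∀ i j, Gᶜ.Adj i j → B i j = 0) :
    ∑ i, ∑ j, B i j ≤ 1 - G.degree u / μ := by
  let := Fintype.ofFinite (G ≃g G)
  set B' := groupAverage (G ≃g G) B
  have hB' : B'.PosSemidef := hB.groupAverage
  have hzero' : ∀ i j, Gᶜ.Adj i j → B' i j = 0 := fun i j hij => by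
    have h : ∀ φ : G ≃g G, Gᶜ.Adj (φ i) (φ j) := fun φ =>
      (G.compl_adj _ _).mpr ⟨φ.injective.ne hij.1, mt φ.map_adj_iff.mp hij.2⟩
    simp [B', groupAverage_apply, hzero _ _ (h _)]
  have hform : B' = B' u u • 1 + B' u v • adjM G :=
    eq_smul_one_add_smul_adjM_of_invariant hvt het (isHermitian_iff_isSymm.mp hB'.isHermitian)
      (fun φ i j => groupAverage_smul_apply B φ i j) hzero' huv
  set a := B' u u
  set c := B' u v
  have ha : Fintype.card V * a = 1 := by
    rw [← trace_smul_one_add_smul_adjM (G := G) a c, ← hform, trace_groupAverage, htr]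
  have hac : 0 ≤ a + c * μ := by
    obtain ⟨w, hw0, hw⟩ := mem_spectrum_iff_exists_mulVec_eq_smul.mp hμ
    refine (hform ▸ hB').nonneg_of_mem_spectrum
      (mem_spectrum_iff_exists_mulVec_eq_smul.mpr ⟨w, hw0, ?_⟩)
    rw [add_mulVec, smul_mulVec, smul_mulVec, one_mulVec, hw, smul_smul, ← add_smul]
  calc ∑ i, ∑ j, B i j = ∑ i, ∑ j, B' i j := (sum_groupAverage B).symm
    _ = Fintype.card V * (a + c * G.degree u) := by
      rw [hform]
      exact sum_smul_one_add_smul_adjM (hvt.isRegularOfDegree u) a c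
    _ ≤ 1 - G.degree u / μ := by
      have key : 1 - G.degree u / μ - Fintype.card V * (a + c * G.degree u)
          = -(G.degree u / μ) * (Fintype.card V * (a + c * μ)) := by
        linear_combination (G.degree u / μ - 1) * ha +
          (G.degree u * Fintype.card V * c) * mul_inv_cancel₀ hμneg.ne
      have hdμ : 0 ≤ -(G.degree u / μ) :=
        neg_nonneg.mpr (div_nonpos_of_nonneg_of_nonpos (Nat.cast_nonneg _) hμneg.le)
      linarith [mul_nonneg hdμ (mul_nonneg (Nat.cast_nonneg (Fintype.card V)) hac)]

theorem exists_nonneg_posSemidef_sum_eq [Nonempty V] {d : ℕ} (hd : G.IsRegularOfDegree d)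
    {μ : ℝ} (hμ : ∀ x ∈ spectrum ℝ (adjM G), μ ≤ x) (hμneg : μ < 0) :
    ∃ B : Matrix V V ℝ, B.PosSemidef ∧ B.trace = 1 ∧ (∀ i j, Gᶜ.Adj i j → B i j = 0) ∧
      (∀ i j, 0 ≤ B i j) ∧ 1 - d / μ = ∑ i, ∑ j, B i j := by
  have hn : (0 : ℝ) < Fintype.card V := Nat.cast_pos.mpr Fintype.card_pos
  obtain ⟨c, hc, hcμ⟩ : ∃ c : ℝ, 0 < c ∧ c * (Fintype.card V * μ) = -1 :=
    ⟨-(Fintype.card V * μ)⁻¹, neg_pos.mpr (inv_lt_zero.mpr (mul_neg_of_pos_of_neg hn hμneg)),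
      by field_simp [hμneg.ne]⟩
  refine ⟨(Fintype.card V : ℝ)⁻¹ • 1 + c • adjM G, ?_, ?_, fun i j hij => ?_, fun i j => ?_, ?_⟩
  · have h : (Fintype.card V : ℝ)⁻¹ • 1 + c • adjM G = c • (adjM G - μ • 1) := by
      have hcμ' : -(c * μ) = (Fintype.card V : ℝ)⁻¹ := by
        field_simp
        linear_combination -hcμ
      rw [smul_sub, smul_smul, sub_eq_add_neg, add_comm, ← neg_smul, hcμ']
    rw [h]
    exact ((isHermitian_adjM G).posSemidef_sub_smul_one hμ).smul hc.le
  · rw [trace_smul_one_add_smul_adjM, mul_inv_cancel₀ hn.ne']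
  · obtain ⟨hne, hnadj⟩ := (G.compl_adj i j).mp hij
    simp [adjM, hne, hnadj]
  · simp only [Matrix.add_apply, Matrix.smul_apply, Matrix.one_apply, adjM, Matrix.of_apply,
      smul_eq_mul]
    split_ifs <;> positivity
  · rw [sum_smul_one_add_smul_adjM hd, mul_add, mul_inv_cancel₀ hn.ne', div_eq_mul_inv]
    linear_combination (-(d * μ⁻¹)) * hcμ + (d * Fintype.card V * c) * mul_inv_cancel₀ hμneg.ne

end Theta

theorem stmt15 {V : Type*} [Fintype V] [DecidableEq V] (G : SimpleGraph V) (n : ℕ)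
    (hn : Fintype.card V = n) (hedge : ∃ u v, G.Adj u v)
    (hvt : VertexTransitive G) (het : EdgeTransitive G) :
    schrijverTheta Gᶜ = 1 - adjEig G 1 / adjEig G n ∧
    lovaszTheta Gᶜ = 1 - adjEig G 1 / adjEig G n := by
  subst hn
  obtain ⟨u, v, huv⟩ := hedge
  have : Nonempty V := ⟨u⟩
  have hd := hvt.isRegularOfDegree u
  have htop : adjEig G 1 = G.degree u :=
    (isGreatest_spectrum_adjEig_one G).unique hd.isGreatest_spectrum_adjMatrix
  obtain ⟨hμ, hμle⟩ := isLeast_spectrum_adjEig_card G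
  have hμneg : adjEig G (Fintype.card V) < 0 := by
    have hdeg : (0 : ℝ) < G.degree u :=
      Nat.cast_pos.mpr ((G.degree_pos_iff_exists_adj u).mpr ⟨v, huv⟩)
    obtain ⟨y, hy, hyneg⟩ := (isHermitian_adjM G).exists_neg_mem_spectrum
      (G.trace_adjMatrix (α := ℝ)) hd.isGreatest_spectrum_adjMatrix.1 hdeg
    exact (hμle hy).trans_lt hyneg
  obtain ⟨B₀, hpsd, htr, hzero, hnonneg, hsum⟩ := exists_nonneg_posSemidef_sum_eq hd hμle hμneg
  rw [htop]
  refine ⟨IsGreatest.csSup_eq ⟨⟨B₀, hpsd, htr, hzero, hnonneg, hsum⟩, ?_⟩,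
    IsGreatest.csSup_eq ⟨⟨B₀, hpsd, htr, hzero, hsum⟩, ?_⟩⟩
  · rintro _ ⟨B, hB, htr, hzero, -, rfl⟩
    exact sum_le_one_sub_degree_div hvt het huv hμ hμneg hB htr hzero
  · rintro _ ⟨B, hB, htr, hzero, rfl⟩
    exact sum_le_one_sub_degree_div hvt het huv hμ hμneg hB htr hzero
end
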